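/- arXiv:1901.00698 — 13 statements merged into one kernel-verified Lean document; each statement's English description precedes it below -/
import Mathlib

section
/- Let τ > 0 and σ > 1, and set M_0 = 1, M_p = p^{τ p^σ} for integers p ≥ 1. Then the sequence (M_p) is logarithmically convex: for every integer p ≥ 1 one has (M_p)^2 ≤ M_{p-1} · M_{p+1}. -/
open Real Set

private lemma gevrey_f_deriv1 (σ : ℝ) {x : ℝ} (hx : 0 < x) :
    HasDerivAt (fun x : ℝ => x ^ σ * Real.log x) (x ^ (σ - 1) * (σ * Real.log x + 1)) x := by
  have h1 : HasDerivAt (fun x : ℝ => x ^ σ) (σ * x ^ (σ - 1)) x :=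
    Real.hasDerivAt_rpow_const (Or.inl hx.ne')
  have h2 := Real.hasDerivAt_log hx.ne'
  have h := h1.mul h2
  refine h.congr_deriv ?_
  have : x ^ (σ - 1) = x ^ σ / x := Real.rpow_sub_one hx.ne' σ
  rw [this, div_eq_mul_inv]
  ring

private lemma gevrey_f_convex {σ : ℝ} (hσ : 1 < σ) :
    ConvexOn ℝ (Set.Ici (1 : ℝ)) (fun x : ℝ => x ^ σ * Real.log x) := by
  set f : ℝ → ℝ := fun x => x ^ σ * Real.log x with hf
  set g : ℝ → ℝ := fun x => x ^ (σ - 1) * (σ * Real.log x + 1) with hg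
  have hderiv : ∀ x : ℝ, 0 < x → deriv f x = g x := fun x hx => (gevrey_f_deriv1 σ hx).deriv
  have hgd : ∀ x : ℝ, 0 < x →
      HasDerivAt g ((σ - 1) * x ^ (σ - 1 - 1) * (σ * Real.log x + 1) + x ^ (σ - 1) * (σ / x)) x := by
    intro x hx
    have h1 : HasDerivAt (fun x : ℝ => x ^ (σ - 1)) ((σ - 1) * x ^ (σ - 1 - 1)) x :=
      Real.hasDerivAt_rpow_const (Or.inl hx.ne')
    have h2 : HasDerivAt (fun x : ℝ => σ * Real.log x + 1) (σ / x) x := by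
      have := ((Real.hasDerivAt_log hx.ne').const_mul σ).add_const 1
      simpa [div_eq_mul_inv] using this
    exact h1.mul h2
  have hmem : ∀ x : ℝ, x ∈ interior (Set.Ici (1:ℝ)) → 1 < x := by
    intro x hx; rwa [interior_Ici, Set.mem_Ioi] at hx
  refine convexOn_of_deriv2_nonneg (convex_Ici 1) ?_ ?_ ?_ ?_
  · exact ContinuousOn.mul (fun x hx => (Real.continuousAt_rpow_const x σ
      (Or.inl (by have : (1:ℝ) ≤ x := hx; positivity))).continuousWithinAt)
      (fun x hx => (Real.continuousAt_log (by have : (1:ℝ) ≤ x := hx; positivity)).continuousWithinAt)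
  · intro x hx
    exact ((gevrey_f_deriv1 σ (by linarith [hmem x hx])).differentiableAt).differentiableWithinAt
  · intro x hx
    have hx1 := hmem x hx
    have hx0 : 0 < x := by linarith
    have hev : deriv f =ᶠ[nhds x] g :=
      Filter.eventuallyEq_of_mem (isOpen_Ioi.mem_nhds (show (0:ℝ) < x from hx0))
        (fun y hy => hderiv y hy)
    exact (((hgd x hx0).congr_of_eventuallyEq hev).differentiableAt).differentiableWithinAt
  · intro x hx
    have hx1 := hmem x hx
    have hx0 : 0 < x := by linarith
    have hev : deriv f =ᶠ[nhds x] g :=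
      Filter.eventuallyEq_of_mem (isOpen_Ioi.mem_nhds (show (0:ℝ) < x from hx0))
        (fun y hy => hderiv y hy)
    have : deriv (deriv f) x = (σ - 1) * x ^ (σ - 1 - 1) * (σ * Real.log x + 1) + x ^ (σ - 1) * (σ / x) := by
      rw [hev.deriv_eq]
      exact (hgd x hx0).deriv
    simp only [Function.iterate_succ, Function.iterate_zero, Function.comp_apply, id]
    rw [this]
    have hlog : 0 ≤ Real.log x := Real.log_nonneg (le_of_lt hx1)
    have h1 : (0:ℝ) < x ^ (σ - 1 - 1) := Real.rpow_pos_of_pos hx0 _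
    have h2 : (0:ℝ) < x ^ (σ - 1) := Real.rpow_pos_of_pos hx0 _
    have h3 : (0:ℝ) < σ / x := by positivity
    have h4 : (0:ℝ) ≤ σ * Real.log x + 1 := by nlinarith
    have h5 : (0:ℝ) ≤ (σ - 1) * x ^ (σ - 1 - 1) * (σ * Real.log x + 1) :=
      mul_nonneg (mul_nonneg (by linarith) h1.le) h4
    nlinarith

/-- For τ > 0, σ > 1 and M_0 = 1, M_p = p^{τ p^σ} (p ≥ 1), the sequence
(M_p) is logarithmically convex: (M_p)^2 ≤ M_{p-1} · M_{p+1} for all p ≥ 1.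
(With the real-power convention, (0:ℝ) ^ (τ * (0:ℝ)^σ) = 0^0 = 1, so M 0 = 1.) -/
theorem extended_gevrey_log_convex (τ σ : ℝ) (hτ : 0 < τ) (hσ : 1 < σ)
    (M : ℕ → ℝ) (hM : ∀ p : ℕ, M p = (p : ℝ) ^ (τ * (p : ℝ) ^ σ)) :
    ∀ p : ℕ, 1 ≤ p → (M p) ^ 2 ≤ M (p - 1) * M (p + 1) := by
  intro p hp
  rcases eq_or_lt_of_le hp with h1 | h2
  · -- p = 1
    subst h1
    simp only [Nat.cast_one, Nat.sub_self, Nat.cast_zero, hM]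
    rw [Real.one_rpow, one_pow,
      Real.zero_rpow (by positivity : σ ≠ 0), mul_zero, Real.rpow_zero, one_mul,
      show (((1:ℕ)+1:ℕ):ℝ) = (2:ℝ) by norm_num]
    exact Real.one_le_rpow (by norm_num) (by positivity)
  · -- p ≥ 2
    have hp2 : 2 ≤ p := h2
    have hpR : (2:ℝ) ≤ (p:ℝ) := by exact_mod_cast hp2
    have hconv := gevrey_f_convex hσ
    have hmem1 : ((p:ℝ) - 1) ∈ Set.Ici (1:ℝ) := by simp only [Set.mem_Ici]; linarith
    have hmem2 : ((p:ℝ) + 1) ∈ Set.Ici (1:ℝ) := by simp only [Set.mem_Ici]; linarith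
    have key := hconv.2 hmem1 hmem2 (by norm_num : (0:ℝ) ≤ 1/2) (by norm_num : (0:ℝ) ≤ 1/2)
      (by norm_num)
    have hmid : (1/2 : ℝ) • ((p:ℝ) - 1) + (1/2 : ℝ) • ((p:ℝ) + 1) = (p:ℝ) := by
      simp [smul_eq_mul]; ring
    rw [hmid] at key
    simp only [smul_eq_mul] at key
    -- key : p^σ * log p ≤ 1/2 * ((p-1)^σ * log(p-1)) + 1/2 * ((p+1)^σ * log(p+1))
    have hsub : ((p - 1 : ℕ) : ℝ) = (p:ℝ) - 1 := by
      have : (1:ℕ) ≤ p := hp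
      push_cast [this]; ring
    have hadd : ((p + 1 : ℕ) : ℝ) = (p:ℝ) + 1 := by push_cast; ring
    have hp0 : (0:ℝ) < (p:ℝ) := by linarith
    have hm0 : (0:ℝ) < (p:ℝ) - 1 := by linarith
    have ha0 : (0:ℝ) < (p:ℝ) + 1 := by linarith
    rw [hM p, hM (p-1), hM (p+1), hsub, hadd]
    rw [Real.rpow_def_of_pos hp0, Real.rpow_def_of_pos hm0, Real.rpow_def_of_pos ha0,
      ← Real.exp_add, ← Real.exp_nat_mul]
    rw [Real.exp_le_exp]
    have h := mul_le_mul_of_nonneg_left key (le_of_lt hτ)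
    push_cast
    nlinarith [h]
end

section
/- Let τ > 0 and σ > 1, and set M_0 = 1, M_p = p^{τ p^σ} for integers p ≥ 1. Then there exists a constant C > 0 such that for all integers p, q ≥ 0: (p+q)^{τ (p+q)^σ} ≤ C^{p^σ + q^σ} · p^{2^{σ-1} τ p^σ} · q^{2^{σ-1} τ q^σ} (with the convention 0^{τ·0^σ} = 1). -/
/-!
With `s = p + q`, `a = p ^ σ` and `b = q ^ σ`, convexity of `t ↦ t ^ σ` gives
`s ^ σ ≤ 2 ^ (σ - 1) (a + b)`, so it suffices to bound `s ^ a * s ^ b` by `K ^ (a + b) p ^ a q ^ b`.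
For `s ^ a`, write `s = p (1 + q / p) ≤ 2 p exp ((q / p) ^ σ)`: raising to the power `a` turns the
correction factor into `exp ((q / p) ^ σ p ^ σ) = exp b`, whence `s ^ a ≤ 2 ^ a e ^ b p ^ a`, and
symmetrically for `s ^ b`; so `K = 2e` works.
-/

open Real

namespace Real

theorem rpow_add_le_mul_rpow_add_rpow {x y p : ℝ} (hx : 0 ≤ x) (hy : 0 ≤ y) (hp : 1 ≤ p) :
    (x + y) ^ p ≤ 2 ^ (p - 1) * (x ^ p + y ^ p) := by
  lift x to NNReal using hx
  lift y to NNReal using hy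
  exact_mod_cast NNReal.rpow_add_le_mul_rpow_add_rpow x y hp

theorem one_add_le_two_mul_exp_rpow {t σ : ℝ} (ht : 0 ≤ t) (hσ : 1 ≤ σ) :
    1 + t ≤ 2 * exp (t ^ σ) := by
  have hexp : 1 ≤ exp (t ^ σ) := one_le_exp (by positivity)
  rcases le_total t 1 with ht1 | ht1
  · linarith
  · calc 1 + t ≤ exp t := by linarith [add_one_le_exp t]
      _ ≤ exp (t ^ σ) := exp_le_exp.2 (self_le_rpow_of_one_le ht1 hσ)
      _ ≤ 2 * exp (t ^ σ) := by linarith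

theorem add_rpow_rpow_le {x y σ : ℝ} (hx : 0 ≤ x) (hy : 0 ≤ y) (hσ : 1 ≤ σ) :
    (x + y) ^ x ^ σ ≤ 2 ^ x ^ σ * exp (y ^ σ) * x ^ x ^ σ := by
  rcases hx.eq_or_lt with rfl | hx
  · simp [zero_rpow (by linarith : σ ≠ 0), one_le_exp (rpow_nonneg hy σ)]
  have hsplit : x + y = x * (1 + y / x) := by field_simp
  have hexp : exp ((y / x) ^ σ) ^ x ^ σ = exp (y ^ σ) := by
    rw [← exp_mul, div_rpow hy hx.le, div_mul_cancel₀ _ (rpow_pos_of_pos hx σ).ne']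
  calc (x + y) ^ x ^ σ ≤ (2 * exp ((y / x) ^ σ) * x) ^ x ^ σ := by
        gcongr
        rw [hsplit, mul_comm x]
        gcongr
        exact one_add_le_two_mul_exp_rpow (by positivity) hσ
    _ = 2 ^ x ^ σ * exp (y ^ σ) * x ^ x ^ σ := by
        rw [mul_rpow (by positivity) hx.le, mul_rpow zero_le_two (exp_pos _).le, hexp]

theorem add_rpow_rpow_mul_add_rpow_rpow_le {x y σ : ℝ} (hx : 0 ≤ x) (hy : 0 ≤ y)
    (hσ : 1 ≤ σ) :
    (x + y) ^ x ^ σ * (x + y) ^ y ^ σ ≤ (2 * exp 1) ^ (x ^ σ + y ^ σ) * x ^ x ^ σ * y ^ y ^ σ := by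
  have hyx := add_rpow_rpow_le hy hx hσ
  rw [add_comm y] at hyx
  calc (x + y) ^ x ^ σ * (x + y) ^ y ^ σ
      ≤ (2 ^ x ^ σ * exp (y ^ σ) * x ^ x ^ σ) * (2 ^ y ^ σ * exp (x ^ σ) * y ^ y ^ σ) :=
        mul_le_mul (add_rpow_rpow_le hx hy hσ) hyx (by positivity) (by positivity)
    _ = (2 * exp 1) ^ (x ^ σ + y ^ σ) * x ^ x ^ σ * y ^ y ^ σ := by
        rw [mul_rpow zero_le_two (exp_pos 1).le, exp_one_rpow, exp_add,
          rpow_add zero_lt_two]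
        ring

theorem add_rpow_mul_add_rpow_le {x y τ σ : ℝ} (hx : 0 ≤ x) (hy : 0 ≤ y) (hxy : 1 ≤ x + y)
    (hτ : 0 ≤ τ) (hσ : 1 ≤ σ) :
    (x + y) ^ (τ * (x + y) ^ σ) ≤
      ((2 * exp 1) ^ (2 ^ (σ - 1) * τ)) ^ (x ^ σ + y ^ σ) *
        x ^ (2 ^ (σ - 1) * τ * x ^ σ) * y ^ (2 ^ (σ - 1) * τ * y ^ σ) := by
  set B : ℝ := 2 ^ (σ - 1) * τ
  have hB : 0 ≤ B := by positivity
  have hexponent : τ * (x + y) ^ σ ≤ (x ^ σ + y ^ σ) * B := by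
    have := rpow_add_le_mul_rpow_add_rpow hx hy hσ
    calc τ * (x + y) ^ σ ≤ τ * (2 ^ (σ - 1) * (x ^ σ + y ^ σ)) := by gcongr
      _ = (x ^ σ + y ^ σ) * B := by ring
  calc (x + y) ^ (τ * (x + y) ^ σ) ≤ (x + y) ^ ((x ^ σ + y ^ σ) * B) :=
        rpow_le_rpow_of_exponent_le hxy hexponent
    _ = ((x + y) ^ x ^ σ * (x + y) ^ y ^ σ) ^ B := by
        rw [rpow_mul (by positivity), rpow_add (by positivity)]
    _ ≤ ((2 * exp 1) ^ (x ^ σ + y ^ σ) * x ^ x ^ σ * y ^ y ^ σ) ^ B :=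
        rpow_le_rpow (by positivity) (add_rpow_rpow_mul_add_rpow_rpow_le hx hy hσ) hB
    _ = ((2 * exp 1) ^ B) ^ (x ^ σ + y ^ σ) * x ^ (B * x ^ σ) * y ^ (B * y ^ σ) := by
        rw [mul_rpow (by positivity) (by positivity), mul_rpow (by positivity) (by positivity),
          ← rpow_mul (by positivity), ← rpow_mul hx, ← rpow_mul hy, ← rpow_mul (by positivity),
          mul_comm B, mul_comm B, mul_comm B]

end Real

/-- property (M.2)̄ of the sequence M_p = p^{τ p^σ}: there is C > 0 with
(p+q)^{τ(p+q)^σ} ≤ C^{p^σ+q^σ} · p^{2^{σ-1} τ p^σ} · q^{2^{σ-1} τ q^σ} for all p, q ≥ 0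
(real-power convention: 0 ^ 0 = 1). -/
theorem extended_gevrey_M2bar (τ σ : ℝ) (hτ : 0 < τ) (hσ : 1 < σ) :
    ∃ C : ℝ, 0 < C ∧ ∀ p q : ℕ,
      ((p + q : ℕ) : ℝ) ^ (τ * ((p + q : ℕ) : ℝ) ^ σ) ≤
        C ^ ((p : ℝ) ^ σ + (q : ℝ) ^ σ) *
          (p : ℝ) ^ ((2 : ℝ) ^ (σ - 1) * τ * (p : ℝ) ^ σ) *
          (q : ℝ) ^ ((2 : ℝ) ^ (σ - 1) * τ * (q : ℝ) ^ σ) := by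
  refine ⟨(2 * exp 1) ^ (2 ^ (σ - 1) * τ), by positivity, fun p q => ?_⟩
  rcases Nat.eq_zero_or_pos (p + q) with hpq | hpq
  · obtain ⟨rfl, rfl⟩ := Nat.add_eq_zero_iff.1 hpq
    simp [zero_rpow (by linarith : σ ≠ 0)]
  · push_cast at hpq ⊢
    exact add_rpow_mul_add_rpow_le p.cast_nonneg q.cast_nonneg (by exact_mod_cast hpq) hτ.le hσ.le
end

section
/- Let τ > 0 and σ > 1, and set M_0 = 1, M_p = p^{τ p^σ} for integers p ≥ 1. Then for every integer p ≥ 1 one has M_{p-1}/M_p ≤ (2p)^{-τ (p-1)^{σ-1}}, and consequently the series ∑_{p=1}^{∞} M_{p-1}/M_p converges. -/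
/-!
Write `q = p - 1`. Taking logarithms, the ratio bound for `q ≥ 1` becomes
`q^σ log q + q^(σ-1) log (2(q+1)) ≤ (q+1)^σ log (q+1)`, which is the sum of two elementary
estimates: `q^(σ-1) log 2 ≤ q^σ log (1 + 1/q)` (as `2^(1/q) ≤ 1 + 1/q`) and
`q^(σ-1) ≤ (q+1)^σ - q^σ` (Bernoulli). Since `τ q^(σ-1) → ∞`, the bound eventually beats
`q^(-2)`, which gives summability.
-/

open Real Filter

theorem rpow_add_rpow_sub_one_le_add_one_rpow {σ x : ℝ} (hσ : 1 ≤ σ) (hx : 0 < x) :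
    x ^ σ + x ^ (σ - 1) ≤ (x + 1) ^ σ := by
  have bernoulli : 1 + σ * x⁻¹ ≤ (1 + x⁻¹) ^ σ :=
    one_add_mul_self_le_rpow_one_add (by linarith [inv_pos.mpr hx]) hσ
  have hsub : x ^ (σ - 1) = x ^ σ * x⁻¹ := by rw [rpow_sub_one hx.ne', div_eq_mul_inv]
  calc x ^ σ + x ^ (σ - 1) ≤ x ^ σ * (1 + σ * x⁻¹) := by
        rw [hsub]
        nlinarith [mul_nonneg (rpow_nonneg hx.le σ) (inv_nonneg.mpr hx.le)]
    _ ≤ x ^ σ * (1 + x⁻¹) ^ σ := by gcongr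
    _ = (x + 1) ^ σ := by
        rw [← mul_rpow hx.le (by positivity), mul_add, mul_inv_cancel₀ hx.ne', mul_one]

theorem log_two_le_mul_log_one_add_inv {x : ℝ} (hx : 1 ≤ x) : log 2 ≤ x * log (1 + x⁻¹) := by
  have hx0 : 0 < x := by linarith
  have hroot : (2 : ℝ) ^ x⁻¹ ≤ 1 + x⁻¹ := by
    simpa [one_add_one_eq_two] using
      rpow_one_add_le_one_add_mul_self (s := 1) (p := x⁻¹) (by norm_num) (by positivity)
        (inv_le_one_of_one_le₀ hx)
  have hlog : x⁻¹ * log 2 ≤ log (1 + x⁻¹) := by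
    rw [← log_rpow two_pos]
    exact log_le_log (by positivity) hroot
  calc log 2 = x * (x⁻¹ * log 2) := by field_simp
    _ ≤ x * log (1 + x⁻¹) := by gcongr

theorem rpow_mul_log_add_rpow_sub_one_mul_log_le {σ q : ℝ} (hσ : 1 ≤ σ) (hq : 1 ≤ q) :
    q ^ σ * log q + q ^ (σ - 1) * log (2 * (q + 1)) ≤ (q + 1) ^ σ * log (q + 1) := by
  have hq0 : 0 < q := by linarith
  have hlog_two : q ^ (σ - 1) * log 2 ≤ q ^ σ * (log (q + 1) - log q) := by
    have hdiff : log (q + 1) - log q = log (1 + q⁻¹) := by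
      rw [← log_div (by positivity) hq0.ne', add_div, div_self hq0.ne', one_div]
    calc q ^ (σ - 1) * log 2 ≤ q ^ (σ - 1) * (q * log (1 + q⁻¹)) := by
          gcongr; exact log_two_le_mul_log_one_add_inv hq
      _ = q ^ σ * (log (q + 1) - log q) := by
          rw [hdiff, ← mul_assoc, ← rpow_add_one hq0.ne', sub_add_cancel]
  have hlog_succ : q ^ (σ - 1) * log (q + 1) ≤ ((q + 1) ^ σ - q ^ σ) * log (q + 1) := by
    gcongr
    · exact log_nonneg (by linarith)
    · linarith [rpow_add_rpow_sub_one_le_add_one_rpow hσ hq0]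
  rw [log_mul two_ne_zero (by positivity)]
  nlinarith

theorem rpow_div_add_one_rpow_le {τ σ q : ℝ} (hτ : 0 ≤ τ) (hσ : 1 ≤ σ) (hq : 1 ≤ q) :
    q ^ (τ * q ^ σ) / (q + 1) ^ (τ * (q + 1) ^ σ) ≤ (2 * (q + 1)) ^ (-(τ * q ^ (σ - 1))) := by
  have hq0 : 0 < q := by linarith
  rw [← log_le_log_iff (by positivity) (by positivity), log_div (by positivity) (by positivity),
    log_rpow hq0, log_rpow (by positivity), log_rpow (by positivity)]
  nlinarith [mul_le_mul_of_nonneg_left (rpow_mul_log_add_rpow_sub_one_mul_log_le hσ hq) hτ]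

theorem natCast_rpow_div_add_one_rpow_le {τ σ : ℝ} (hτ : 0 ≤ τ) (hσ : 1 < σ) (q : ℕ) :
    (q : ℝ) ^ (τ * (q : ℝ) ^ σ) / ((q : ℝ) + 1) ^ (τ * ((q : ℝ) + 1) ^ σ)
      ≤ (2 * ((q : ℝ) + 1)) ^ (-(τ * (q : ℝ) ^ (σ - 1))) := by
  rcases Nat.eq_zero_or_pos q with rfl | hq
  · simp [zero_rpow (by linarith : σ ≠ 0), zero_rpow (by linarith : σ - 1 ≠ 0)]
  · exact rpow_div_add_one_rpow_le hτ hσ.le (by exact_mod_cast hq)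

theorem summable_two_mul_add_one_rpow_neg {τ σ : ℝ} (hτ : 0 < τ) (hσ : 1 < σ) :
    Summable fun q : ℕ => (2 * ((q : ℝ) + 1)) ^ (-(τ * (q : ℝ) ^ (σ - 1))) := by
  have hexp : Tendsto (fun q : ℕ => τ * (q : ℝ) ^ (σ - 1)) atTop atTop :=
    ((tendsto_rpow_atTop (by linarith)).comp tendsto_natCast_atTop_atTop).const_mul_atTop hτ
  refine Summable.of_norm_bounded_eventually_nat (g := fun q : ℕ => (q : ℝ) ^ (-2 : ℝ))
    (summable_nat_rpow.mpr (by norm_num)) ?_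
  filter_upwards [hexp.eventually_ge_atTop 2, eventually_ge_atTop 1] with q hτq hq
  have hq0 : (0 : ℝ) < q := by exact_mod_cast hq
  rw [norm_of_nonneg (by positivity)]
  calc (2 * ((q : ℝ) + 1)) ^ (-(τ * (q : ℝ) ^ (σ - 1))) ≤ (2 * ((q : ℝ) + 1)) ^ (-2 : ℝ) :=
        rpow_le_rpow_of_exponent_le (by linarith) (by linarith)
    _ ≤ (q : ℝ) ^ (-2 : ℝ) := rpow_le_rpow_of_nonpos hq0 (by linarith) (by norm_num)

/-- property (M.3)′ of the sequence M_p = p^{τ p^σ} (M_0 = 1, via the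
real-power convention 0 ^ 0 = 1): M_{p-1}/M_p ≤ (2p)^{-τ(p-1)^{σ-1}} for p ≥ 1, and the
series ∑_{p≥1} M_{p-1}/M_p converges. -/
theorem extended_gevrey_M3_prime (τ σ : ℝ) (hτ : 0 < τ) (hσ : 1 < σ)
    (M : ℕ → ℝ) (hM : ∀ p : ℕ, M p = (p : ℝ) ^ (τ * (p : ℝ) ^ σ)) :
    (∀ p : ℕ, 1 ≤ p →
        M (p - 1) / M p ≤ ((2 * p : ℕ) : ℝ) ^ (-(τ * ((p : ℝ) - 1) ^ (σ - 1)))) ∧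
      Summable (fun p : ℕ => M p / M (p + 1)) := by
  have hratio : ∀ q : ℕ,
      M q / M (q + 1) ≤ (2 * ((q : ℝ) + 1)) ^ (-(τ * (q : ℝ) ^ (σ - 1))) := fun q => by
    simpa [hM] using natCast_rpow_div_add_one_rpow_le hτ.le hσ q
  refine ⟨fun p hp => ?_, ?_⟩
  · obtain ⟨q, rfl⟩ := Nat.exists_eq_add_of_le' hp
    simpa using hratio q
  · refine (summable_two_mul_add_one_rpow_neg hτ hσ).of_nonneg_of_le (fun q => ?_) hratio
    simp only [hM]
    positivity
end

section
/- Let τ > 0 and σ > 1. Then for every t > 1 there exists a constant C > 0 such that for all k > 0: sup over integers p ≥ 0 of ln(k^p / p^{τ p^σ}) < C · k^{1/t} (with the convention 0^{τ·0^σ} = 1, so the term for p = 0 equals ln 1 = 0). -/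
set_option maxHeartbeats 1000000


/-- for τ > 0, σ > 1 and every t > 1 there is C > 0 such that for all k > 0,
sup_{p ∈ ℕ} ln(k^p / p^{τ p^σ}) < C · k^{1/t} (real-power convention: 0 ^ 0 = 1, so the
p = 0 term equals ln 1 = 0). -/
theorem extended_gevrey_associated_function_bound (τ σ : ℝ) (hτ : 0 < τ) (hσ : 1 < σ) :
    ∀ t : ℝ, 1 < t → ∃ C : ℝ, 0 < C ∧ ∀ k : ℝ, 0 < k →
      (⨆ p : ℕ, Real.log (k ^ p / (p : ℝ) ^ (τ * (p : ℝ) ^ σ))) < C * k ^ (1 / t) := by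
  intro t ht
  obtain ⟨t', ht'def⟩ : ∃ t' : ℝ, t' = t + 1 := ⟨_, rfl⟩
  have ht'0 : 0 < t' := by rw [ht'def]; linarith
  obtain ⟨p0, hp0def⟩ : ∃ p0 : ℕ, p0 = ⌈(t'/τ) ^ (1/(σ-1))⌉₊ + 1 := ⟨_, rfl⟩
  refine ⟨(p0 : ℝ) * t + t' + 1, by positivity, ?_⟩
  intro k hk
  have hkt : 0 < k ^ (1/t) := Real.rpow_pos_of_pos hk _
  have hcoeff : 0 ≤ (p0 : ℝ) * t + t' := by positivity
  -- value of the term for p ≥ 1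
  have hlogval : ∀ p : ℕ, 1 ≤ p →
      Real.log (k ^ p / (p:ℝ) ^ (τ * (p:ℝ)^σ))
        = p * Real.log k - τ * (p:ℝ)^σ * Real.log p := by
    intro p hp
    have hp0 : (0:ℝ) < p := by exact_mod_cast hp
    rw [Real.log_div (pow_ne_zero _ hk.ne') (Real.rpow_pos_of_pos hp0 _).ne',
      Real.log_pow, Real.log_rpow hp0]
  have hzero : Real.log (k ^ (0:ℕ) / ((0:ℕ):ℝ) ^ (τ * ((0:ℕ):ℝ)^σ)) = 0 := by
    have hσ0 : σ ≠ 0 := by linarith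
    simp [Real.zero_rpow hσ0]
  have hbound : ∀ p : ℕ, Real.log (k ^ p / (p:ℝ) ^ (τ * (p:ℝ)^σ))
      ≤ ((p0:ℝ) * t + t') * k ^ (1/t) := by
    intro p
    rcases Nat.eq_zero_or_pos p with rfl | hp1
    · rw [hzero]; positivity
    have hp0R : (0:ℝ) < p := by exact_mod_cast hp1
    have hp1R : (1:ℝ) ≤ p := by exact_mod_cast hp1
    have hplog : 0 ≤ Real.log p := Real.log_nonneg hp1R
    rw [hlogval p hp1]
    rcases le_or_gt k 1 with hk1 | hk1
    · have hlk : Real.log k ≤ 0 := Real.log_nonpos hk.le hk1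
      have h1 : (p:ℝ) * Real.log k - τ * (p:ℝ)^σ * Real.log p ≤ 0 := by
        have : 0 ≤ τ * (p:ℝ)^σ * Real.log p := by positivity
        nlinarith
      nlinarith
    · -- k > 1
      have hlk : 0 ≤ Real.log k := Real.log_nonneg hk1.le
      -- log k ≤ t * k^(1/t)
      have hlogk_le : Real.log k ≤ t * k ^ (1/t) := by
        have h1 : Real.log (k ^ (1/t)) ≤ k ^ (1/t) - 1 := Real.log_le_sub_one_of_pos hkt
        have h2 : Real.log (k ^ (1/t)) = (1/t) * Real.log k := Real.log_rpow hk _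
        have ht0 : 0 < t := by linarith
        rw [h2] at h1
        have := mul_le_mul_of_nonneg_left h1 ht0.le
        calc Real.log k = t * ((1/t) * Real.log k) := by field_simp
          _ ≤ t * (k ^ (1/t) - 1) := this
          _ ≤ t * k ^ (1/t) := by nlinarith
      rcases lt_or_ge p p0 with hpp | hpp
      · -- small p : term ≤ p * log k ≤ p0 * t * k^(1/t)
        have hppR : (p:ℝ) ≤ p0 := by exact_mod_cast hpp.le
        have h1 : (p:ℝ) * Real.log k - τ * (p:ℝ)^σ * Real.log p ≤ (p:ℝ) * Real.log k := by
          have : 0 ≤ τ * (p:ℝ)^σ * Real.log p := by positivity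
          linarith
        have h2 : (p:ℝ) * Real.log k ≤ (p0:ℝ) * Real.log k :=
          mul_le_mul_of_nonneg_right hppR hlk
        have h3 : (p0:ℝ) * Real.log k ≤ (p0:ℝ) * (t * k ^ (1/t)) :=
          mul_le_mul_of_nonneg_left hlogk_le (by positivity)
        have h4 : 0 ≤ t' * k ^ (1/t) := by positivity
        nlinarith
      · -- large p
        have hppR : ((t'/τ) ^ (1/(σ-1)) : ℝ) ≤ p := by
          have h1 : ((t'/τ) ^ (1/(σ-1)) : ℝ) ≤ ⌈(t'/τ) ^ (1/(σ-1))⌉₊ := Nat.le_ceil _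
          have h2 : ((⌈(t'/τ) ^ (1/(σ-1))⌉₊ : ℝ)) ≤ p := by
            have : (p0 : ℝ) ≤ p := by exact_mod_cast hpp
            have : ((⌈(t'/τ) ^ (1/(σ-1))⌉₊ : ℝ) + 1) ≤ p := by
              rw [hp0def] at this; push_cast at this; linarith
            linarith
          linarith
        have hσ1 : (0:ℝ) < σ - 1 := by linarith
        have hbase : (0:ℝ) ≤ (t'/τ) ^ (1/(σ-1)) := by positivity
        have hkey : t' / τ ≤ (p:ℝ) ^ (σ - 1) := by
          have h1 := Real.rpow_le_rpow hbase hppR hσ1.le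
          rwa [← Real.rpow_mul (by positivity), one_div, inv_mul_cancel₀ hσ1.ne',
            Real.rpow_one] at h1
        have hpσ : t' * (p:ℝ) ≤ τ * (p:ℝ)^σ := by
          have h1 : (p:ℝ)^σ = (p:ℝ)^(σ-1) * p := by
            rw [← Real.rpow_add_one hp0R.ne' (σ-1)]; ring_nf
          have h2 : t' ≤ τ * (p:ℝ)^(σ-1) := by
            rw [div_le_iff₀ hτ] at hkey; linarith
          rw [h1]
          nlinarith
        have h1 : (p:ℝ) * Real.log k - τ * (p:ℝ)^σ * Real.log p
            ≤ (p:ℝ) * Real.log k - t' * (p:ℝ) * Real.log p := by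
          nlinarith
        -- p * log k - t' * p * log p ≤ t' * k^(1/t')
        have hkt' : 0 < k ^ (1/t') := Real.rpow_pos_of_pos hk _
        have hx : (0:ℝ) < k ^ (1/t') / p := by positivity
        have h2 : Real.log (k ^ (1/t') / p) ≤ k ^ (1/t') / p - 1 :=
          Real.log_le_sub_one_of_pos hx
        have h3 : Real.log (k ^ (1/t') / p) = (1/t') * Real.log k - Real.log p := by
          rw [Real.log_div hkt'.ne' hp0R.ne', Real.log_rpow hk]
        rw [h3] at h2
        have h4 := mul_le_mul_of_nonneg_left h2 (by positivity : (0:ℝ) ≤ t' * p)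
        have h5 : t' * (p:ℝ) * ((1/t') * Real.log k - Real.log p)
            = (p:ℝ) * Real.log k - t' * (p:ℝ) * Real.log p := by
          field_simp
        have h6 : t' * (p:ℝ) * (k ^ (1/t') / p - 1) = t' * k ^ (1/t') - t' * p := by
          field_simp
        rw [h5, h6] at h4
        have h7 : k ^ (1/t') ≤ k ^ (1/t) := by
          apply Real.rpow_le_rpow_of_exponent_le hk1.le
          have ht0 : 0 < t := by linarith
          rw [div_le_div_iff₀ ht'0 ht0, ht'def]
          linarith
        have h8 : 0 ≤ (p0:ℝ) * t * k ^ (1/t) := by positivity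
        have h9 := mul_le_mul_of_nonneg_left h7 ht'0.le
        have h10 : 0 < t' * (p:ℝ) := mul_pos ht'0 hp0R
        nlinarith
  have hsup : (⨆ p : ℕ, Real.log (k ^ p / (p:ℝ) ^ (τ * (p:ℝ)^σ)))
      ≤ ((p0:ℝ) * t + t') * k ^ (1/t) := ciSup_le hbound
  have : ((p0:ℝ) * t + t') * k ^ (1/t) < ((p0:ℝ) * t + t' + 1) * k ^ (1/t) := by
    nlinarith
  linarith
end

section
/- Let τ > 0, σ > 1 and h > 0, and let W be the principal branch of the Lambert W function. Then there exists a constant C > e such that for all k ≥ C: sup over integers p ≥ 0 of ln(h^{p^σ} k^p / p^{τ p^σ}) ≤ ((σ-1)/(τσ))^{1/(σ-1)} · W(𝔯(h,k))^{-1/(σ-1)} · (ln k)^{σ/(σ-1)}, where 𝔯(h,k) = h^{-(σ-1)/τ} · e^{(σ-1)/σ} · ((σ-1)/(τσ)) · ln k. -/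
lemma aux_u_log (u : ℝ) (hu : 0 < u) : u - 1 ≤ u * Real.log u := by
  have h1 : Real.log u⁻¹ ≤ u⁻¹ - 1 := Real.log_le_sub_one_of_pos (by positivity)
  rw [Real.log_inv] at h1
  have h2 := mul_le_mul_of_nonneg_left h1 hu.le
  have h3 : u * u⁻¹ = 1 := mul_inv_cancel₀ hu.ne'
  nlinarith [h2, h3]

lemma aux_B (σ u : ℝ) (hσ : 1 ≤ σ) (hu : 0 < u) : u - 1 ≤ u ^ σ * Real.log u := by
  have hl := aux_u_log u hu
  rcases le_total 1 u with h | h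
  · have e1 : u ≤ u ^ σ := by
      calc u = u ^ (1 : ℝ) := (Real.rpow_one u).symm
      _ ≤ u ^ σ := Real.rpow_le_rpow_of_exponent_le h hσ
    have e2 : 0 ≤ Real.log u := Real.log_nonneg h
    nlinarith [mul_le_mul_of_nonneg_right e1 e2]
  · have e1 : u ^ σ ≤ u := by
      calc u ^ σ ≤ u ^ (1 : ℝ) := Real.rpow_le_rpow_of_exponent_ge hu h hσ
      _ = u := Real.rpow_one u
    have e2 : Real.log u ≤ 0 := Real.log_nonpos hu.le h
    nlinarith [mul_le_mul_of_nonpos_right e1 e2]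

lemma aux_key (σ τ m u : ℝ) (hσ : 1 ≤ σ) (hτ : 0 ≤ τ) (hm : 0 ≤ m) (hu : 0 < u) :
    u * (σ * m + τ) - u ^ σ * m - τ * (u ^ σ * Real.log u) ≤ σ * m + τ := by
  have hA : 1 + σ * (u - 1) ≤ u ^ σ := by
    have := one_add_mul_self_le_rpow_one_add (by linarith : (-1 : ℝ) ≤ u - 1) hσ
    simpa using this
  have hB := aux_B σ u hσ hu
  nlinarith [mul_le_mul_of_nonneg_left hA hm, mul_le_mul_of_nonneg_left hB hτ]

/-- upper estimate of the extended associated function. W is the principal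
branch of the Lambert W function (characterized as the nonnegative function on [0,∞) with
W(x)·e^{W(x)} = x). There is C > e such that for all k ≥ C,
sup_{p ∈ ℕ} ln(h^{p^σ} k^p / p^{τ p^σ})
  ≤ ((σ-1)/(τσ))^{1/(σ-1)} · W(𝔯(h,k))^{-1/(σ-1)} · (ln k)^{σ/(σ-1)},
where 𝔯(h,k) = h^{-(σ-1)/τ} e^{(σ-1)/σ} ((σ-1)/(τσ)) ln k
(real-power convention: 0 ^ 0 = 1 for the p = 0 term). -/
theorem extended_associated_function_upper (τ σ h : ℝ) (hτ : 0 < τ) (hσ : 1 < σ)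
    (hh : 0 < h) (W : ℝ → ℝ) (hW_nonneg : ∀ x : ℝ, 0 ≤ x → 0 ≤ W x)
    (hW : ∀ x : ℝ, 0 ≤ x → W x * Real.exp (W x) = x) :
    ∃ C : ℝ, Real.exp 1 < C ∧ ∀ k : ℝ, C ≤ k →
      (⨆ p : ℕ, Real.log (h ^ ((p : ℝ) ^ σ) * k ^ p / (p : ℝ) ^ (τ * (p : ℝ) ^ σ))) ≤
        ((σ - 1) / (τ * σ)) ^ (1 / (σ - 1)) *
          (W (h ^ (-((σ - 1) / τ)) * Real.exp ((σ - 1) / σ) * ((σ - 1) / (τ * σ)) *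
              Real.log k)) ^ (-(1 / (σ - 1))) *
          (Real.log k) ^ (σ / (σ - 1)) := by
  set a := σ - 1 with ha_def
  have ha : 0 < a := by simp only [ha_def]; linarith
  have hσ0 : 0 < σ := by linarith
  have hτσ : 0 < τ * σ := by positivity
  refine ⟨max (Real.exp 2) (Real.exp (τ * h ^ (a / τ))), ?_, ?_⟩
  · exact lt_of_lt_of_le (Real.exp_lt_exp.mpr one_lt_two) (le_max_left _ _)
  intro k hk
  have hkpos : 0 < k := lt_of_lt_of_le (Real.exp_pos 2) (le_trans (le_max_left _ _) hk)
  set L := Real.log k with hL_def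
  have hL2 : (2 : ℝ) ≤ L := (Real.le_log_iff_exp_le hkpos).mpr (le_trans (le_max_left _ _) hk)
  have hLth : τ * h ^ (a / τ) ≤ L :=
    (Real.le_log_iff_exp_le hkpos).mpr (le_trans (le_max_right _ _) hk)
  have hLpos : 0 < L := by linarith
  set r := h ^ (-(a / τ)) * Real.exp (a / σ) * (a / (τ * σ)) * L with hr_def
  have hrpos : 0 < r := by
    have : (0 : ℝ) < h ^ (-(a / τ)) := Real.rpow_pos_of_pos hh _
    positivity
  set w := W r with hw_def
  have hw0 : 0 ≤ w := hW_nonneg r hrpos.le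
  have hwe : w * Real.exp w = r := hW r hrpos.le
  have haσ : 0 < a / σ := div_pos ha hσ0
  have hwlb : a / σ ≤ w := by
    by_contra hcon
    push_neg at hcon
    have h1 : w * Real.exp w < (a / σ) * Real.exp (a / σ) := by
      calc w * Real.exp w ≤ w * Real.exp (a / σ) :=
            mul_le_mul_of_nonneg_left (Real.exp_le_exp.mpr hcon.le) hw0
      _ < (a / σ) * Real.exp (a / σ) := mul_lt_mul_of_pos_right hcon (Real.exp_pos _)
    have hh1 : h ^ (-(a / τ)) * h ^ (a / τ) = 1 := by
      rw [← Real.rpow_add hh]; simp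
    have step : h ^ (-(a / τ)) * Real.exp (a / σ) * (a / (τ * σ)) * (τ * h ^ (a / τ))
        = (a / σ) * Real.exp (a / σ) := by
      have h2 : a / (τ * σ) * τ = a / σ := by field_simp
      calc h ^ (-(a / τ)) * Real.exp (a / σ) * (a / (τ * σ)) * (τ * h ^ (a / τ))
          = (h ^ (-(a / τ)) * h ^ (a / τ)) * (Real.exp (a / σ) * (a / (τ * σ) * τ)) := by ring
      _ = Real.exp (a / σ) * (a / σ) := by rw [hh1, h2]; ring
      _ = (a / σ) * Real.exp (a / σ) := by ring
    have h3 : (a / σ) * Real.exp (a / σ) ≤ r := by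
      have hpref : (0 : ℝ) ≤ h ^ (-(a / τ)) * Real.exp (a / σ) * (a / (τ * σ)) := by
        have : (0 : ℝ) < h ^ (-(a / τ)) := Real.rpow_pos_of_pos hh _
        positivity
      calc (a / σ) * Real.exp (a / σ)
          = h ^ (-(a / τ)) * Real.exp (a / σ) * (a / (τ * σ)) * (τ * h ^ (a / τ)) := step.symm
      _ ≤ h ^ (-(a / τ)) * Real.exp (a / σ) * (a / (τ * σ)) * L :=
            mul_le_mul_of_nonneg_left hLth hpref
      _ = r := rfl
    rw [hwe] at h1
    linarith
  have hwpos : 0 < w := lt_of_lt_of_le haσ hwlb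
  have hlogr : Real.log r = w + Real.log w := by
    rw [← hwe, Real.log_mul hwpos.ne' (Real.exp_ne_zero _), Real.log_exp]; ring
  have hlogr2 : Real.log r = -(a / τ) * Real.log h + a / σ + Real.log (a / (τ * σ))
      + Real.log L := by
    rw [hr_def, Real.log_mul (by positivity) hLpos.ne',
      Real.log_mul (by positivity : h ^ (-(a / τ)) * Real.exp (a / σ) ≠ 0)
        (by positivity : a / (τ * σ) ≠ 0),
      Real.log_mul (by positivity : h ^ (-(a / τ)) ≠ 0) (Real.exp_ne_zero _),
      Real.log_rpow hh, Real.log_exp]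
  set b := a / (τ * σ) * L / w with hb_def
  have hbpos : 0 < b := div_pos (mul_pos (div_pos ha hτσ) hLpos) hwpos
  set X := b ^ (1 / a) with hX_def
  have hXpos : 0 < X := Real.rpow_pos_of_pos hbpos _
  have hXa : X ^ a = b := by
    rw [hX_def, ← Real.rpow_mul hbpos.le, one_div_mul_cancel ha.ne', Real.rpow_one]
  have hXapos : 0 < X ^ a := by rw [hXa]; exact hbpos
  have hlogX : Real.log X = w / a + Real.log h / τ - 1 / σ := by
    have hlogb : Real.log b = Real.log (a / (τ * σ)) + Real.log L - Real.log w := by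
      rw [hb_def, Real.log_div (by positivity) hwpos.ne',
        Real.log_mul (by positivity : a / (τ * σ) ≠ 0) hLpos.ne']
    have hlogw : Real.log w = Real.log r - w := by linarith
    rw [hX_def, Real.log_rpow hbpos, hlogb, hlogw, hlogr2]
    field_simp
    ring
  set m := τ * Real.log X - Real.log h with hm_def
  have hmval : m = τ * w / a - τ / σ := by
    rw [hm_def, hlogX]; field_simp; ring
  have hm0 : 0 ≤ m := by
    rw [hmval, sub_nonneg, div_le_div_iff₀ hσ0 ha]
    have := (div_le_iff₀ hσ0).mp hwlb
    nlinarith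
  have key3 : X ^ a * (σ * m + τ) = L := by
    rw [hXa, hmval, hb_def]; field_simp; ring
  have hRHS : (a / (τ * σ)) ^ (1 / a) * w ^ (-(1 / a)) * L ^ (σ / a) = X * L := by
    have hσa : σ / a = 1 / a + 1 := by
      rw [div_add_one ha.ne', ha_def]; ring
    rw [hX_def, hb_def, Real.div_rpow (by positivity) hwpos.le,
      Real.mul_rpow (by positivity : (0 : ℝ) ≤ a / (τ * σ)) hLpos.le,
      Real.rpow_neg hwpos.le, hσa, Real.rpow_add hLpos, Real.rpow_one]
    field_simp
  rw [hRHS]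
  apply ciSup_le
  intro p
  match p with
  | 0 =>
    have : Real.log (h ^ (((0 : ℕ) : ℝ) ^ σ) * k ^ (0 : ℕ) / ((0 : ℕ) : ℝ) ^ (τ * ((0 : ℕ) : ℝ) ^ σ)) = 0 := by
      simp [Real.zero_rpow hσ0.ne']
    rw [this]
    positivity
  | Nat.succ n =>
    set x := ((n + 1 : ℕ) : ℝ) with hx_def
    have hxpos : 0 < x := by positivity
    have hterm : Real.log (h ^ (x ^ σ) * k ^ (n + 1) / x ^ (τ * x ^ σ))
        = x ^ σ * Real.log h + x * L - τ * (x ^ σ * Real.log x) := by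
      rw [Real.log_div (by positivity) (by positivity), Real.log_mul (by positivity) (by positivity),
        Real.log_rpow hh, Real.log_pow, Real.log_rpow hxpos, hx_def]
      push_cast
      ring
    rw [hterm]
    set u := x / X with hu_def
    have hu : 0 < u := div_pos hxpos hXpos
    have hxu : x = u * X := by rw [hu_def]; field_simp
    have hlogx : Real.log x = Real.log u + Real.log X := by
      rw [hxu, Real.log_mul hu.ne' hXpos.ne']
    have hXσ : X ^ σ = X ^ a * X := by
      have : σ = a + 1 := by rw [ha_def]; ring
      rw [this, Real.rpow_add hXpos, Real.rpow_one]
    have hxσ : x ^ σ = u ^ σ * (X ^ a * X) := by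
      rw [hxu, Real.mul_rpow hu.le hXpos.le, hXσ]
    have hlogh : Real.log h = τ * Real.log X - m := by rw [hm_def]; ring
    have hL' : L = X ^ a * (σ * m + τ) := key3.symm
    have K := aux_key σ τ m u hσ.le hτ.le hm0 hu
    have K' := mul_le_mul_of_nonneg_left K (mul_pos hXpos hXapos).le
    rw [hxσ, hlogx, hlogh, hxu, hL']
    calc u ^ σ * (X ^ a * X) * (τ * Real.log X - m) + u * X * (X ^ a * (σ * m + τ))
          - τ * (u ^ σ * (X ^ a * X) * (Real.log u + Real.log X))
        = (X * X ^ a) * (u * (σ * m + τ) - u ^ σ * m - τ * (u ^ σ * Real.log u)) := by ring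
      _ ≤ (X * X ^ a) * (σ * m + τ) := K'
      _ = X * (X ^ a * (σ * m + τ)) := by ring
end

section
/- Let τ > 0, σ > 1 and h > 0, and let W be the principal branch of the Lambert W function. Then there exist constants H > 0 and C > e such that for all k ≥ C: sup over integers p ≥ 0 of ln(h^{p^σ} k^p / p^{τ p^σ}) ≥ (2^{σ-1} τ)^{-1/(σ-1)} · ((σ-1)/σ)^{σ/(σ-1)} · W(𝔯(h,k))^{-1/(σ-1)} · (ln k)^{σ/(σ-1)} − H, where 𝔯(h,k) = h^{-(σ-1)/τ} · e^{(σ-1)/σ} · ((σ-1)/(τσ)) · ln k. -/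
private lemma term_formula {τ σ h k : ℝ} (hh : 0 < h) (hk : 0 < k) {p : ℕ} (hp : 1 ≤ p) :
    Real.log (h ^ ((p : ℝ) ^ σ) * k ^ p / (p : ℝ) ^ (τ * (p : ℝ) ^ σ)) =
      (p : ℝ) ^ σ * Real.log h + p * Real.log k - τ * (p : ℝ) ^ σ * Real.log p := by
  have hp0 : (0:ℝ) < p := by exact_mod_cast hp
  rw [Real.log_div (by positivity) (by positivity),
    Real.log_mul (by positivity) (by positivity),
    Real.log_rpow hh, Real.log_pow, Real.log_rpow hp0]

private lemma bdd_term {τ σ h k : ℝ} (hτ : 0 < τ) (hσ : 1 < σ) (hh : 0 < h) (hk : 1 ≤ k) :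
    BddAbove (Set.range fun p : ℕ =>
      Real.log (h ^ ((p : ℝ) ^ σ) * k ^ p / (p : ℝ) ^ (τ * (p : ℝ) ^ σ))) := by
  set c := (Real.log h + Real.log k) / τ with hc
  refine ⟨τ * Real.exp (σ * max c 0) * max c 0, ?_⟩
  rintro y ⟨p, rfl⟩
  dsimp only
  have hM : (0:ℝ) ≤ τ * Real.exp (σ * max c 0) * max c 0 := by positivity
  rcases Nat.eq_zero_or_pos p with rfl | hp
  · simp only [Nat.cast_zero]
    rw [Real.zero_rpow (by linarith : σ ≠ 0), mul_zero, Real.rpow_zero, Real.rpow_zero,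
      pow_zero, mul_one]
    simpa using hM
  · rw [term_formula hh (by linarith) hp]
    have hP1 : (1:ℝ) ≤ p := by exact_mod_cast hp
    have hP0 : (0:ℝ) < p := by linarith
    have hL : 0 ≤ Real.log k := Real.log_nonneg hk
    have hlogP : 0 ≤ Real.log p := Real.log_nonneg hP1
    have hkey : (p:ℝ) ≤ (p:ℝ) ^ σ := by
      calc (p:ℝ) = (p:ℝ) ^ (1:ℝ) := (Real.rpow_one _).symm
      _ ≤ (p:ℝ) ^ σ := Real.rpow_le_rpow_of_exponent_le hP1 hσ.le
    have hPσ : (0:ℝ) < (p:ℝ) ^ σ := Real.rpow_pos_of_pos hP0 _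
    have htc : Real.log h + Real.log k = τ * c := by
      rw [hc, mul_div_assoc']; exact (mul_div_cancel_left₀ _ hτ.ne').symm
    have step : (p:ℝ)^σ * Real.log h + p * Real.log k - τ * (p:ℝ)^σ * Real.log p
        ≤ τ * (p:ℝ)^σ * (c - Real.log p) := by
      nlinarith [mul_le_mul_of_nonneg_right hkey hL]
    refine step.trans ?_
    rcases le_or_gt c (Real.log p) with hcase | hcase
    · nlinarith [mul_nonneg (mul_pos hτ hPσ).le (sub_nonneg.mpr hcase)]
    · have hc0 : 0 < c := lt_of_le_of_lt hlogP hcase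
      have hmax : max c 0 = c := max_eq_left hc0.le
      have hPexp : (p:ℝ)^σ ≤ Real.exp (σ * max c 0) := by
        rw [Real.rpow_def_of_pos hP0]
        apply Real.exp_le_exp.mpr
        rw [hmax]
        nlinarith
      have h1 : c - Real.log p ≤ max c 0 := by rw [hmax]; linarith
      have h2 : 0 ≤ c - Real.log p := by linarith
      calc τ * (p:ℝ)^σ * (c - Real.log p)
          ≤ τ * Real.exp (σ * max c 0) * (c - Real.log p) :=
            mul_le_mul_of_nonneg_right (mul_le_mul_of_nonneg_left hPexp hτ.le) h2
        _ ≤ τ * Real.exp (σ * max c 0) * max c 0 :=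
            mul_le_mul_of_nonneg_left h1 (by positivity)

set_option maxHeartbeats 1000000 in
/-- lower estimate of the extended associated function. W is the principal
branch of the Lambert W function. There are H > 0 and C > e such that for all k ≥ C,
sup_{p ∈ ℕ} ln(h^{p^σ} k^p / p^{τ p^σ})
  ≥ (2^{σ-1} τ)^{-1/(σ-1)} · ((σ-1)/σ)^{σ/(σ-1)} · W(𝔯(h,k))^{-1/(σ-1)} · (ln k)^{σ/(σ-1)} − H,
where 𝔯(h,k) = h^{-(σ-1)/τ} e^{(σ-1)/σ} ((σ-1)/(τσ)) ln k. -/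
theorem extended_associated_function_lower (τ σ h : ℝ) (hτ : 0 < τ) (hσ : 1 < σ)
    (hh : 0 < h) (W : ℝ → ℝ) (hW_nonneg : ∀ x : ℝ, 0 ≤ x → 0 ≤ W x)
    (hW : ∀ x : ℝ, 0 ≤ x → W x * Real.exp (W x) = x) :
    ∃ H C : ℝ, 0 < H ∧ Real.exp 1 < C ∧ ∀ k : ℝ, C ≤ k →
      (⨆ p : ℕ, Real.log (h ^ ((p : ℝ) ^ σ) * k ^ p / (p : ℝ) ^ (τ * (p : ℝ) ^ σ))) ≥
        ((2 : ℝ) ^ (σ - 1) * τ) ^ (-(1 / (σ - 1))) * ((σ - 1) / σ) ^ (σ / (σ - 1)) *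
          (W (h ^ (-((σ - 1) / τ)) * Real.exp ((σ - 1) / σ) * ((σ - 1) / (τ * σ)) *
              Real.log k)) ^ (-(1 / (σ - 1))) *
          (Real.log k) ^ (σ / (σ - 1)) - H := by
  have hs1 : (0:ℝ) < σ - 1 := by linarith
  have hs0 : (0:ℝ) < σ := by linarith
  set cr := h ^ (-((σ - 1) / τ)) * Real.exp ((σ - 1) / σ) * ((σ - 1) / (τ * σ)) with hcr
  have hcr0 : 0 < cr := by
    have h1 : (0:ℝ) < h ^ (-((σ - 1) / τ)) := Real.rpow_pos_of_pos hh _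
    have h2 : (0:ℝ) < (σ - 1) / (τ * σ) := div_pos hs1 (by positivity)
    positivity
  clear_value cr
  set w0 := max 1 ((σ - 1) * Real.log (2 * h ^ (-(1/τ)) * Real.exp (1/σ))) with hw0def
  have hw01 : (1:ℝ) ≤ w0 := le_max_left _ _
  clear_value w0
  refine ⟨1, max (Real.exp 2) (Real.exp (w0 * Real.exp w0 / cr)), one_pos, ?_, ?_⟩
  · calc Real.exp 1 < Real.exp 2 := Real.exp_lt_exp.mpr one_lt_two
      _ ≤ _ := le_max_left _ _
  intro k hk
  have hk2 : Real.exp 2 ≤ k := le_trans (le_max_left _ _) hk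
  have hk0 : (0:ℝ) < k := lt_of_lt_of_le (Real.exp_pos 2) hk2
  have hk1 : (1:ℝ) ≤ k := by
    have : (1:ℝ) ≤ Real.exp 2 := Real.one_le_exp (by norm_num)
    linarith
  set L := Real.log k with hLdef
  have hL2 : (2:ℝ) ≤ L := by
    rw [hLdef, ← Real.log_exp 2]
    exact Real.log_le_log (Real.exp_pos 2) hk2
  have hL0 : (0:ℝ) < L := by linarith
  clear_value L
  set w := W (cr * L) with hwdef
  have hcrL : (0:ℝ) ≤ cr * L := by positivity
  have hw_nonneg : 0 ≤ w := hW_nonneg _ hcrL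
  have hwEq : w * Real.exp w = cr * L := hW _ hcrL
  clear_value w
  -- w is large
  have hww0 : w0 ≤ w := by
    by_contra hlt
    push_neg at hlt
    have hexp : Real.exp w ≤ Real.exp w0 := Real.exp_le_exp.mpr hlt.le
    have h1 : cr * L < w0 * Real.exp w0 := by
      have hE0 : (0:ℝ) < Real.exp w0 := Real.exp_pos _
      nlinarith [hwEq, mul_le_mul_of_nonneg_left hexp hw_nonneg,
        mul_lt_mul_of_pos_right hlt hE0]
    have hLlarge : w0 * Real.exp w0 / cr ≤ L := by
      rw [hLdef, ← Real.log_exp (w0 * Real.exp w0 / cr)]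
      exact Real.log_le_log (Real.exp_pos _) (le_trans (le_max_right _ _) hk)
    rw [div_le_iff₀ hcr0] at hLlarge
    nlinarith
  have hw1 : (1:ℝ) ≤ w := le_trans hw01 hww0
  have hwpos : (0:ℝ) < w := by linarith
  -- define x
  set x := ((σ - 1) / (τ * σ) * L / w) ^ (1 / (σ - 1)) with hxdef
  have hbase0 : (0:ℝ) < (σ - 1) / (τ * σ) * L / w := by
    have : (0:ℝ) < (σ - 1) / (τ * σ) := div_pos hs1 (by positivity)
    positivity
  have hx0 : (0:ℝ) < x := Real.rpow_pos_of_pos hbase0 _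
  clear_value x
  have hxσ : x ^ (σ - 1) = (σ - 1) / (τ * σ) * L / w := by
    rw [hxdef, ← Real.rpow_mul hbase0.le, one_div, inv_mul_cancel₀ hs1.ne', Real.rpow_one]
  -- exp w = cr * L / w
  have hexpw : Real.exp w = cr * L / w := by
    rw [eq_div_iff hwpos.ne']
    nlinarith [hwEq]
  -- w = log cr + log L - log w
  have hwlog : w = Real.log cr + Real.log L - Real.log w := by
    have h1 : w = Real.log (cr * L / w) := by rw [← hexpw, Real.log_exp]
    rw [Real.log_div (by positivity) hwpos.ne', Real.log_mul hcr0.ne' hL0.ne'] at h1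
    exact h1
  have hlogcr : Real.log cr =
      -((σ - 1) / τ) * Real.log h + (σ - 1) / σ + Real.log ((σ - 1) / (τ * σ)) := by
    rw [hcr, Real.log_mul (by positivity) (by positivity),
      Real.log_mul (by positivity) (Real.exp_pos _).ne', Real.log_rpow hh, Real.log_exp]
  -- log x formula
  have hlogx : Real.log x = (1/τ) * Real.log h - 1/σ + w / (σ - 1) := by
    have h1 : Real.log x = (1 / (σ - 1)) * Real.log ((σ - 1) / (τ * σ) * L / w) := by
      rw [hxdef]; exact Real.log_rpow hbase0 _
    rw [Real.log_div (by positivity) hwpos.ne',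
      Real.log_mul (by positivity) hL0.ne'] at h1
    have h2 : Real.log ((σ - 1) / (τ * σ)) + Real.log L - Real.log w
        = (σ - 1)/τ * Real.log h - (σ - 1)/σ + w := by linarith [hwlog, hlogcr]
    rw [h1, h2]
    field_simp
  -- x ≥ 2
  have hx2 : (2:ℝ) ≤ x := by
    have hlog2 : Real.log (2 * h ^ (-(1/τ)) * Real.exp (1/σ))
        = Real.log 2 - (1/τ) * Real.log h + 1/σ := by
      rw [Real.log_mul (by positivity) (Real.exp_pos _).ne',
        Real.log_mul two_ne_zero (by positivity), Real.log_rpow hh, Real.log_exp]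
      ring
    have hwge : (σ - 1) * (Real.log 2 - (1/τ) * Real.log h + 1/σ) ≤ w := by
      rw [← hlog2]
      exact le_trans (le_trans (le_max_right _ _) (le_of_eq hw0def.symm)) hww0
    have hlogle : Real.log 2 ≤ Real.log x := by
      rw [hlogx]
      have h6 : Real.log 2 - (1/τ) * Real.log h + 1/σ ≤ w / (σ - 1) := by
        rw [le_div_iff₀ hs1]
        nlinarith [hwge]
      linarith
    calc (2:ℝ) = Real.exp (Real.log 2) := (Real.exp_log two_pos).symm
      _ ≤ Real.exp (Real.log x) := Real.exp_le_exp.mpr hlogle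
      _ = x := Real.exp_log hx0
  -- choose p = floor x
  set p := ⌊x⌋₊ with hpdef
  have hPx : (p:ℝ) ≤ x := Nat.floor_le hx0.le
  have hxP : x < (p:ℝ) + 1 := Nat.lt_floor_add_one x
  have hP1 : (1:ℝ) ≤ (p:ℝ) := by
    have : (1:ℝ) ≤ x - 1 := by linarith
    linarith
  have hp1 : 1 ≤ p := by exact_mod_cast Nat.one_le_cast.mp (by exact_mod_cast hP1)
  have hP0 : (0:ℝ) < p := by linarith
  have hPhalf : x / 2 ≤ (p:ℝ) := by linarith
  -- key bound
  have hkey : τ * (p:ℝ)^σ * (Real.log p - Real.log h / τ) ≤ (p:ℝ) * L / σ := by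
    rcases le_or_gt (Real.log p) (Real.log h / τ) with hc | hc
    · have hPσ : (0:ℝ) < (p:ℝ)^σ := Real.rpow_pos_of_pos hP0 _
      have h7 : τ * (p:ℝ)^σ * (Real.log p - Real.log h / τ) ≤ τ * (p:ℝ)^σ * 0 :=
        mul_le_mul_of_nonneg_left (by linarith) (mul_pos hτ hPσ).le
      have h8 : (0:ℝ) ≤ (p:ℝ) * L / σ := div_nonneg (mul_nonneg hP0.le hL0.le) hs0.le
      nlinarith [h7, h8]
    · have hPpow : (p:ℝ)^σ ≤ (p:ℝ) * x^(σ-1) := by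
        have h1 : (p:ℝ)^σ = (p:ℝ) * (p:ℝ)^(σ-1) := by
          rw [show σ = 1 + (σ-1) by ring, Real.rpow_add hP0, Real.rpow_one]
          ring_nf
        have h2 : (p:ℝ)^(σ-1) ≤ x^(σ-1) := Real.rpow_le_rpow hP0.le hPx hs1.le
        rw [h1]
        nlinarith
      have hlogPx : Real.log p ≤ Real.log x := Real.log_le_log hP0 hPx
      have hxc : Real.log x - Real.log h / τ ≤ w / (σ - 1) := by
        rw [hlogx]
        have h3 : (0:ℝ) < 1/σ := by positivity
        have h4 : (1/τ) * Real.log h = Real.log h / τ := by ring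
        linarith
      have hA : (p:ℝ)^σ * (Real.log p - Real.log h / τ)
          ≤ ((p:ℝ) * x^(σ-1)) * (w / (σ - 1)) := by
        apply mul_le_mul hPpow (by linarith) (by linarith) (by positivity)
      have e2 : τ * (((p:ℝ) * x^(σ-1)) * (w / (σ - 1))) = (p:ℝ) * L / σ := by
        rw [hxσ]
        field_simp
      nlinarith [mul_le_mul_of_nonneg_left hA hτ.le]
  -- value lower bound
  have hf : (σ - 1) / σ * ((p:ℝ) * L)
      ≤ (p:ℝ)^σ * Real.log h + (p:ℝ) * L - τ * (p:ℝ)^σ * Real.log p := by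
    have hid : τ * (p:ℝ)^σ * (Real.log p - Real.log h / τ)
        = τ * (p:ℝ)^σ * Real.log p - (p:ℝ)^σ * Real.log h := by
      field_simp
    have hσid : (σ - 1) / σ * ((p:ℝ) * L) = (p:ℝ) * L - (p:ℝ) * L / σ := by
      field_simp
    linarith [hkey]
  -- the grand identity
  have hxval : x = ((σ-1)/σ) ^ (1/(σ-1)) * τ ^ (-(1/(σ-1))) * L ^ (1/(σ-1))
      * (w ^ (1/(σ-1)))⁻¹ := by
    have hrw : (σ - 1) / (τ * σ) * L / w = (σ-1)/σ * τ⁻¹ * L * w⁻¹ := by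
      field_simp
    rw [hxdef, hrw]
    rw [Real.mul_rpow (by positivity) (by positivity)]
    rw [Real.mul_rpow (by positivity) (by positivity)]
    rw [Real.mul_rpow (by positivity) (by positivity)]
    rw [Real.inv_rpow hτ.le, Real.inv_rpow hwpos.le, ← Real.rpow_neg hτ.le]
  have h2split : ((2:ℝ) ^ (σ - 1) * τ) ^ (-(1 / (σ - 1))) = 2⁻¹ * τ ^ (-(1/(σ-1))) := by
    rw [Real.mul_rpow (by positivity) hτ.le, ← Real.rpow_mul (by norm_num : (0:ℝ) ≤ 2),
      show (σ-1) * (-(1/(σ-1))) = -1 by field_simp, Real.rpow_neg_one]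
  have hexpid : σ / (σ - 1) = 1 + 1/(σ-1) := by field_simp; ring
  have hpow_s : ((σ-1)/σ) ^ (σ/(σ-1)) = (σ-1)/σ * ((σ-1)/σ) ^ (1/(σ-1)) := by
    rw [hexpid, Real.rpow_add (div_pos hs1 hs0), Real.rpow_one]
  have hpow_L : L ^ (σ/(σ-1)) = L * L ^ (1/(σ-1)) := by
    rw [hexpid, Real.rpow_add hL0, Real.rpow_one]
  have hE : ((2:ℝ) ^ (σ - 1) * τ) ^ (-(1 / (σ - 1))) * ((σ - 1) / σ) ^ (σ / (σ - 1)) *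
      w ^ (-(1 / (σ - 1))) * L ^ (σ / (σ - 1)) = (σ - 1) / σ * x * L / 2 := by
    rw [h2split, hpow_s, hpow_L, Real.rpow_neg hwpos.le, hxval]
    ring
  -- assemble
  have hterm := term_formula (τ := τ) (σ := σ) hh hk0 hp1
  have hsup := le_ciSup (bdd_term hτ hσ hh hk1) p
  rw [hterm, ← hLdef] at hsup
  rw [ge_iff_le, hE]
  have hmono : (σ - 1) / σ * (x/2 * L) ≤ (σ - 1) / σ * ((p:ℝ) * L) := by
    have h5 : (0:ℝ) < (σ-1)/σ := div_pos hs1 hs0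
    exact mul_le_mul_of_nonneg_left (mul_le_mul_of_nonneg_right hPhalf hL0.le) h5.le
  have : (σ - 1) / σ * x * L / 2 = (σ - 1) / σ * (x/2 * L) := by ring
  rw [this]
  calc (σ - 1) / σ * (x/2 * L) - 1 ≤ (σ - 1) / σ * ((p:ℝ) * L) := by linarith
    _ ≤ (p:ℝ)^σ * Real.log h + (p:ℝ) * L - τ * (p:ℝ)^σ * Real.log p := hf
    _ ≤ _ := hsup
end

section
/- Let τ > 0, σ > 1 and let W be the principal branch of the Lambert W function. Then for every h > 0 there exists A_h > 0 such that for all integers p ≥ 0 and all real k ≥ e: k^p · exp{ −((σ-1)/(τσ))^{1/(σ-1)} · W(𝔯(h,k))^{-1/(σ-1)} · (ln k)^{σ/(σ-1)} } ≤ A_h · (1/h)^{p^σ} · p^{τ p^σ} (with the convention 0^{τ·0^σ} = 1), where 𝔯(h,k) = h^{-(σ-1)/τ} · e^{(σ-1)/σ} · ((σ-1)/(τσ)) · ln k. -/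
open Real

lemma young' (σ : ℝ) (hσ : 1 < σ) (q t s : ℝ) (hq : 0 ≤ q) (ht : 0 ≤ t) (hs : 0 < s) :
    q * t ≤ q ^ σ * (s / σ) + (σ - 1) / σ * (t ^ (σ / (σ - 1)) * s ^ (-(1 / (σ - 1)))) := by
  have hs1 : (0:ℝ) < σ - 1 := by linarith
  have hσ0 : (0:ℝ) < σ := by linarith
  have hcj : σ.HolderConjugate (σ / (σ - 1)) := (Real.holderConjugate_iff_eq_conjExponent hσ).2 rfl
  have ha : 0 ≤ q * s ^ (1/σ) := mul_nonneg hq (rpow_nonneg hs.le _)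
  have hb : 0 ≤ t * s ^ (-(1/σ)) := mul_nonneg ht (rpow_nonneg hs.le _)
  have h := Real.young_inequality_of_nonneg ha hb hcj
  have hab : q * s ^ (1/σ) * (t * s ^ (-(1/σ))) = q * t := by
    rw [mul_mul_mul_comm, ← rpow_add hs]
    norm_num
  have h1 : (q * s ^ (1/σ)) ^ σ = q ^ σ * s := by
    rw [mul_rpow hq (rpow_nonneg hs.le _), ← Real.rpow_mul hs.le,
      one_div_mul_cancel hσ0.ne', rpow_one]
  have h2 : (t * s ^ (-(1/σ))) ^ (σ/(σ-1)) = t ^ (σ/(σ-1)) * s ^ (-(1/(σ-1))) := by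
    rw [mul_rpow ht (rpow_nonneg hs.le _), ← Real.rpow_mul hs.le]
    congr 2
    field_simp
  rw [hab, h1, h2] at h
  calc q * t ≤ q ^ σ * s / σ + t ^ (σ/(σ-1)) * s ^ (-(1/(σ-1))) / (σ/(σ-1)) := h
    _ = q ^ σ * (s / σ) + (σ - 1) / σ * (t ^ (σ / (σ - 1)) * s ^ (-(1 / (σ - 1)))) := by
        field_simp

set_option maxHeartbeats 1000000 in
lemma key (τ σ h : ℝ) (hτ : 0 < τ) (hσ : 1 < σ) (hh : 0 < h) :
    ∃ B : ℝ, 0 ≤ B ∧ ∀ q t w : ℝ, 1 ≤ q → 1 ≤ t → 0 < w →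
      w * Real.exp w = h ^ (-((σ - 1) / τ)) * Real.exp ((σ - 1) / σ) * ((σ - 1) / (τ * σ)) * t →
      q * t ≤ B + q ^ σ * (Real.log (1 / h) + τ * Real.log q) +
        ((σ - 1) / (τ * σ)) ^ (1 / (σ - 1)) * w ^ (-(1 / (σ - 1))) * t ^ (σ / (σ - 1)) := by
  have hs1 : (0:ℝ) < σ - 1 := by linarith
  have hσ0 : (0:ℝ) < σ := by linarith
  set c : ℝ := (σ - 1) / (τ * σ) with hc_def
  have hc : 0 < c := div_pos hs1 (by positivity)
  set γ : ℝ := h ^ (-((σ - 1) / τ)) * Real.exp ((σ - 1) / σ) * c with hγ_def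
  have hγ : 0 < γ := by
    have := rpow_pos_of_pos hh (-((σ - 1) / τ))
    positivity
  set X : ℝ := ((σ - 1)/σ) ^ (σ - 1) with hX_def
  have hX0 : 0 < X := rpow_pos_of_pos (by positivity) _
  have hX1 : X < 1 := rpow_lt_one (by positivity) (by rw [div_lt_one hσ0]; linarith) hs1
  have hXe : X ^ (1/(σ-1)) = (σ-1)/σ := by
    rw [hX_def, ← Real.rpow_mul (by positivity), mul_one_div, div_self hs1.ne', rpow_one]
  set α : ℝ := X / (σ - 1) with hα_def
  have hα : 0 < α := div_pos hX0 hs1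
  set β : ℝ := Real.log h / τ with hβ_def
  set δ₁ : ℝ := 1/(σ-1) - α with hδ₁_def
  have hδ₁ : 0 < δ₁ := by
    have : X/(σ-1) < 1/(σ-1) := by gcongr
    simp only [hδ₁_def, hα_def]; linarith
  set C' : ℝ := c ^ (1/(σ-1)) / γ ^ (σ/(σ-1)) with hC'_def
  have hC' : 0 < C' := div_pos (rpow_pos_of_pos hc _) (rpow_pos_of_pos hγ _)
  set K₁ : ℝ := Real.exp β / γ with hK₁_def
  have hK₁ : 0 < K₁ := div_pos (exp_pos _) hγ
  set K₂ : ℝ := Real.exp (σ*β) * |Real.log h| with hK₂_def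
  have hK₂ : 0 ≤ K₂ := by positivity
  set M : ℝ := max 1 (max (2*K₁/(C'*δ₁)) (2*K₂/(C'*(σ*δ₁)))) with hM_def
  have hM1 : (1:ℝ) ≤ M := le_max_left _ _
  have hM0 : (0:ℝ) < M := lt_of_lt_of_le one_pos hM1
  have hMe2 : 2*K₁/(C'*δ₁) ≤ M := le_trans (le_max_left _ _) (le_max_right _ _)
  have hMf2 : 2*K₂/(C'*(σ*δ₁)) ≤ M := le_trans (le_max_right _ _) (le_max_right _ _)
  clear_value c γ X α β δ₁ C' K₁ K₂ M
  refine ⟨K₁*M*Real.exp ((α+1)*M) + K₂*Real.exp (σ*α*M), by positivity, ?_⟩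
  intro q t w hq1 ht1 hw0 hw_eq
  have hq0 : (0:ℝ) < q := by linarith
  have ht0 : (0:ℝ) < t := by linarith
  set B : ℝ := K₁*M*Real.exp ((α+1)*M) + K₂*Real.exp (σ*α*M) with hB_def
  have hB0 : 0 ≤ B := by positivity
  set E : ℝ := c ^ (1/(σ-1)) * w ^ (-(1/(σ-1))) * t ^ (σ/(σ-1)) with hE_def
  have hE0 : 0 ≤ E := by positivity
  set L : ℝ := Real.log (1/h) + τ * Real.log q with hL_def
  show q * t ≤ B + q ^ σ * L + E
  rcases le_or_gt (X*w) (c*(σ*L)) with hcase | hcase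
  · -- Case A
    have hs : 0 < σ*L := by nlinarith [mul_pos hX0 hw0]
    have hy := young' σ hσ q t (σ*L) hq0.le ht0.le hs
    have h1 : q ^ σ * (σ*L/σ) = q^σ * L := by
      rw [mul_div_assoc]; congr 1; field_simp
    have hle : w ≤ c*(σ*L)/X := by rw [le_div_iff₀ hX0]; linarith [hcase]
    have h2 : (c*(σ*L)/X) ^ (-(1/(σ-1))) ≤ w ^ (-(1/(σ-1))) :=
      rpow_le_rpow_of_nonpos hw0 hle (neg_nonpos.mpr (by positivity))
    have hid : c ^ (1/(σ-1)) * (c*(σ*L)/X) ^ (-(1/(σ-1))) = (σ-1)/σ * (σ*L) ^ (-(1/(σ-1))) := by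
      rw [Real.rpow_neg (by positivity), Real.rpow_neg hs.le,
        Real.div_rpow (by positivity) hX0.le, Real.mul_rpow hc.le hs.le, hXe]
      have h3 : (0:ℝ) < c ^ (1/(σ-1)) := rpow_pos_of_pos hc _
      have h4 : (0:ℝ) < (σ*L) ^ (1/(σ-1)) := rpow_pos_of_pos hs _
      field_simp
    have hstep : (σ-1)/σ * (t ^ (σ/(σ-1)) * (σ*L) ^ (-(1/(σ-1)))) ≤ E := by
      rw [hE_def]
      calc (σ-1)/σ * (t ^ (σ/(σ-1)) * (σ*L) ^ (-(1/(σ-1))))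
          = c ^ (1/(σ-1)) * (c*(σ*L)/X) ^ (-(1/(σ-1))) * t ^ (σ/(σ-1)) := by rw [hid]; ring
        _ ≤ c ^ (1/(σ-1)) * w ^ (-(1/(σ-1))) * t ^ (σ/(σ-1)) := by
            have h3 : (0:ℝ) ≤ c ^ (1/(σ-1)) := (rpow_pos_of_pos hc _).le
            have h4 : (0:ℝ) ≤ t ^ (σ/(σ-1)) := rpow_nonneg ht0.le _
            exact mul_le_mul_of_nonneg_right (mul_le_mul_of_nonneg_left h2 h3) h4
    rw [h1] at hy
    refine hy.trans ?_
    have : q ^ σ * L + (σ-1)/σ * (t ^ (σ/(σ-1)) * (σ*L) ^ (-(1/(σ-1)))) ≤ q ^ σ * L + E :=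
      add_le_add_right hstep _
    linarith [this, hB0]
  · -- Case B
    have hl1h : Real.log (1/h) = -Real.log h := by rw [one_div, Real.log_inv]
    have hlogq : Real.log q < α*w + β := by
      have hcσ : c*σ*τ = σ - 1 := by rw [hc_def]; field_simp
      have hcσ2 : c*σ = (σ-1)/τ := by rw [hc_def]; field_simp
      have h5 : c*σ*(Real.log (1/h)) + (σ-1)*Real.log q < X*w := by
        have hexp : c*(σ*L) = c*σ*Real.log (1/h) + c*σ*τ*Real.log q := by rw [hL_def]; ring
        rw [hcσ] at hexp
        exact hexp ▸ hcase
      rw [hl1h] at h5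
      have h6 : (σ-1)*Real.log q < X*w + (σ-1)*(Real.log h/τ) := by
        have : c*σ*Real.log h = (σ-1)*(Real.log h/τ) := by rw [hcσ2]; field_simp
        linarith [h5, this]
      have h8 : (σ-1)*(α*w + β) = X*w + (σ-1)*(Real.log h/τ) := by
        rw [hα_def, hβ_def]; field_simp
      have h7 : (σ-1)*Real.log q < (σ-1)*(α*w + β) := by rw [h8]; exact h6
      exact lt_of_mul_lt_mul_left h7 hs1.le
    have hq_le : q ≤ Real.exp (α*w+β) := by
      calc q = Real.exp (Real.log q) := (Real.exp_log hq0).symm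
        _ ≤ _ := Real.exp_le_exp.2 hlogq.le
    have hqσ : q ^ σ ≤ Real.exp (σ*(α*w+β)) := by
      calc q ^ σ ≤ (Real.exp (α*w+β)) ^ σ := rpow_le_rpow hq0.le hq_le hσ0.le
        _ = Real.exp (σ*(α*w+β)) := by
            rw [Real.rpow_def_of_pos (exp_pos _), Real.log_exp]; ring_nf
    have ht_eq : t = w * Real.exp w / γ := by
      rw [eq_div_iff hγ.ne', mul_comm t γ]; exact hw_eq.symm
    have hw_pow : w ^ (-(1/(σ-1))) * w ^ (σ/(σ-1)) = w := by
      rw [← Real.rpow_add hw0, show -(1/(σ-1)) + σ/(σ-1) = 1 by field_simp; ring, Real.rpow_one]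
    have hE_eq : E = C' * (w * Real.exp ((σ/(σ-1))*w)) := by
      rw [hE_def, ht_eq, Real.div_rpow (by positivity) hγ.le,
        Real.mul_rpow hw0.le (exp_pos w).le, Real.rpow_def_of_pos (exp_pos w), Real.log_exp,
        hC'_def]
      rw [mul_comm w (σ/(σ-1))]
      calc c ^ (1/(σ-1)) * w ^ (-(1/(σ-1))) *
            (w ^ (σ/(σ-1)) * Real.exp ((σ/(σ-1))*w) / γ ^ (σ/(σ-1)))
          = (c ^ (1/(σ-1)) / γ ^ (σ/(σ-1))) *
            ((w ^ (-(1/(σ-1))) * w ^ (σ/(σ-1))) * Real.exp ((σ/(σ-1))*w)) := by ring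
        _ = c ^ (1/(σ-1)) / γ ^ (σ/(σ-1)) * (w * Real.exp ((σ/(σ-1))*w)) := by rw [hw_pow]
    have hmain : q*t ≤ q ^ σ * L + (K₁*(w*Real.exp ((α+1)*w)) + K₂*Real.exp (σ*α*w)) := by
      have b1 : q*t ≤ Real.exp (α*w+β)*t := mul_le_mul_of_nonneg_right hq_le ht0.le
      have b2 : Real.exp (α*w+β)*t = K₁*(w*Real.exp ((α+1)*w)) := by
        rw [ht_eq, hK₁_def, Real.exp_add, show (α+1)*w = α*w + w by ring, Real.exp_add]
        field_simp
      have b3 : -(q^σ * L) ≤ K₂*Real.exp (σ*α*w) := by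
        have hLlb : -|Real.log h| ≤ L := by
          have h9 : 0 ≤ τ * Real.log q := mul_nonneg hτ.le (Real.log_nonneg hq1)
          rw [hL_def, hl1h]
          have := le_abs_self (Real.log h); linarith
        have hqσ0 : (0:ℝ) ≤ q^σ := rpow_nonneg hq0.le σ
        have hb3 : -(q^σ*L) ≤ q^σ * |Real.log h| := by
          have h12 := mul_nonneg hqσ0 (show (0:ℝ) ≤ L + |Real.log h| by linarith)
          have h13 : q^σ*(L+|Real.log h|) = q^σ*L + q^σ*|Real.log h| := by ring
          linarith
        refine hb3.trans ?_
        refine (mul_le_mul_of_nonneg_right hqσ (abs_nonneg _)).trans ?_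
        rw [hK₂_def, show σ*(α*w+β) = σ*α*w + σ*β by ring, Real.exp_add]
        exact le_of_eq (by ring)
      linarith [b1, b2, b3]
    rcases le_or_gt w M with hwM | hwM
    · have c1 : w*Real.exp ((α+1)*w) ≤ M*Real.exp ((α+1)*M) := by
        refine mul_le_mul hwM (Real.exp_le_exp.2 ?_) (exp_pos _).le hM0.le
        exact mul_le_mul_of_nonneg_left hwM (by positivity)
      have c2 : Real.exp (σ*α*w) ≤ Real.exp (σ*α*M) := by
        refine Real.exp_le_exp.2 ?_
        exact mul_le_mul_of_nonneg_left hwM (by positivity)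
      have hbr : K₁*(w*Real.exp ((α+1)*w)) + K₂*Real.exp (σ*α*w) ≤ B := by
        have g1 := mul_le_mul_of_nonneg_left c1 hK₁.le
        have g2 := mul_le_mul_of_nonneg_left c2 hK₂
        calc K₁*(w*Real.exp ((α+1)*w)) + K₂*Real.exp (σ*α*w)
            ≤ K₁*(M*Real.exp ((α+1)*M)) + K₂*Real.exp (σ*α*M) := by linarith
          _ = B := by rw [hB_def]; ring
      linarith [hmain, hbr, hE0]
    · have hw1 : (1:ℝ) ≤ w := le_trans hM1 hwM.le
      have d1 : K₁*(w*Real.exp ((α+1)*w)) ≤ C'/2 * (w*Real.exp ((σ/(σ-1))*w)) := by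
        have e1 : Real.exp ((σ/(σ-1))*w) = Real.exp ((α+1)*w) * Real.exp (δ₁*w) := by
          rw [← Real.exp_add]; congr 1; rw [hδ₁_def]; field_simp; ring
        have e2 : 2*K₁/(C'*δ₁) ≤ M := hMe2
        have e3 : 2*K₁/C' ≤ δ₁*w := by
          have e5 : (2*K₁/C')/δ₁ ≤ w := by rw [div_div]; exact le_trans e2 hwM.le
          rw [div_le_iff₀ hδ₁] at e5; linarith [e5]
        have e4 : K₁ ≤ C'/2 * Real.exp (δ₁*w) := by
          have e6 := Real.add_one_le_exp (δ₁*w)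
          have h10 : 2*K₁/C' ≤ Real.exp (δ₁*w) := by linarith
          rw [div_le_iff₀ hC'] at h10
          linarith
        calc K₁*(w*Real.exp ((α+1)*w)) ≤ (C'/2*Real.exp (δ₁*w))*(w*Real.exp ((α+1)*w)) :=
              mul_le_mul_of_nonneg_right e4 (by positivity)
          _ = C'/2 * (w*Real.exp ((σ/(σ-1))*w)) := by rw [e1]; ring
      have d2 : K₂*Real.exp (σ*α*w) ≤ C'/2 * (w*Real.exp ((σ/(σ-1))*w)) := by
        have f1 : Real.exp ((σ/(σ-1))*w) = Real.exp (σ*α*w) * Real.exp (σ*δ₁*w) := by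
          rw [← Real.exp_add]; congr 1; rw [hδ₁_def]; field_simp; ring
        have f2 : 2*K₂/(C'*(σ*δ₁)) ≤ M := hMf2
        have hσδ : (0:ℝ) < σ*δ₁ := mul_pos hσ0 hδ₁
        have f3 : 2*K₂/C' ≤ σ*δ₁*w := by
          have f5 : (2*K₂/C')/(σ*δ₁) ≤ w := by rw [div_div]; exact le_trans f2 hwM.le
          rw [div_le_iff₀ hσδ] at f5; linarith [f5]
        have f4 : K₂ ≤ C'/2 * Real.exp (σ*δ₁*w) := by
          have f6 := Real.add_one_le_exp (σ*δ₁*w)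
          have h11 : 2*K₂/C' ≤ Real.exp (σ*δ₁*w) := by linarith
          rw [div_le_iff₀ hC'] at h11
          linarith
        calc K₂*Real.exp (σ*α*w)
            ≤ (C'/2*Real.exp (σ*δ₁*w))*Real.exp (σ*α*w) :=
              mul_le_mul_of_nonneg_right f4 (exp_pos _).le
          _ = C'/2 * (1*Real.exp ((σ/(σ-1))*w)) := by rw [f1]; ring
          _ ≤ C'/2 * (w*Real.exp ((σ/(σ-1))*w)) := by
              have f7 := (exp_pos ((σ/(σ-1))*w)).le
              exact mul_le_mul_of_nonneg_left
                (mul_le_mul_of_nonneg_right hw1 f7) (by positivity)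
      have hbr : K₁*(w*Real.exp ((α+1)*w)) + K₂*Real.exp (σ*α*w) ≤ E := by
        rw [hE_eq]
        have : C'/2 * (w*Real.exp ((σ/(σ-1))*w)) + C'/2 * (w*Real.exp ((σ/(σ-1))*w))
            = C' * (w*Real.exp ((σ/(σ-1))*w)) := by ring
        linarith [d1, d2]
      linarith [hmain, hbr, hB0]



/-- for every h > 0 there is A_h > 0 such that for all integers p ≥ 0 and all
k ≥ e,
k^p · exp{−((σ-1)/(τσ))^{1/(σ-1)} · W(𝔯(h,k))^{-1/(σ-1)} · (ln k)^{σ/(σ-1)}}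
  ≤ A_h · (1/h)^{p^σ} · p^{τ p^σ},
where 𝔯(h,k) = h^{-(σ-1)/τ} e^{(σ-1)/σ} ((σ-1)/(τσ)) ln k and W is the principal branch of
the Lambert W function (real-power convention: 0 ^ 0 = 1). -/
theorem extended_associated_function_equiv_bound (τ σ : ℝ) (hτ : 0 < τ) (hσ : 1 < σ)
    (W : ℝ → ℝ) (hW_nonneg : ∀ x : ℝ, 0 ≤ x → 0 ≤ W x)
    (hW : ∀ x : ℝ, 0 ≤ x → W x * Real.exp (W x) = x) :
    ∀ h : ℝ, 0 < h → ∃ A : ℝ, 0 < A ∧ ∀ (p : ℕ) (k : ℝ), Real.exp 1 ≤ k →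
      k ^ p * Real.exp (-(((σ - 1) / (τ * σ)) ^ (1 / (σ - 1)) *
            (W (h ^ (-((σ - 1) / τ)) * Real.exp ((σ - 1) / σ) * ((σ - 1) / (τ * σ)) *
                Real.log k)) ^ (-(1 / (σ - 1))) *
            (Real.log k) ^ (σ / (σ - 1)))) ≤
        A * (1 / h) ^ ((p : ℝ) ^ σ) * (p : ℝ) ^ (τ * (p : ℝ) ^ σ) := by
  intro h hh
  obtain ⟨B, hB0, hkey⟩ := key τ σ h hτ hσ hh
  refine ⟨Real.exp B, Real.exp_pos B, ?_⟩
  intro p k hk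
  have hs1 : (0:ℝ) < σ - 1 := by linarith
  have hσ0 : (0:ℝ) < σ := by linarith
  have hk0 : 0 < k := lt_of_lt_of_le (Real.exp_pos 1) hk
  have ht1 : 1 ≤ Real.log k := by
    rw [Real.le_log_iff_exp_le hk0]; simpa using hk
  set t := Real.log k with ht_def
  have ht0 : 0 < t := by linarith
  have hγ : 0 < h ^ (-((σ - 1) / τ)) * Real.exp ((σ - 1) / σ) * ((σ - 1) / (τ * σ)) := by
    have := Real.rpow_pos_of_pos hh (-((σ - 1) / τ)); positivity
  set r := h ^ (-((σ - 1) / τ)) * Real.exp ((σ - 1) / σ) * ((σ - 1) / (τ * σ)) * t with hr_def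
  have hr0 : 0 < r := mul_pos hγ ht0
  set w := W r with hw_def
  have hw_eq : w * Real.exp w = r := hW r hr0.le
  have hw_nonneg : 0 ≤ w := hW_nonneg r hr0.le
  set E := ((σ - 1) / (τ * σ)) ^ (1 / (σ - 1)) * w ^ (-(1 / (σ - 1))) * t ^ (σ / (σ - 1))
    with hE_def
  have hE0 : 0 ≤ E := by
    have h1 : (0:ℝ) ≤ ((σ-1)/(τ*σ)) := by positivity
    exact mul_nonneg (mul_nonneg (Real.rpow_nonneg h1 _) (Real.rpow_nonneg hw_nonneg _))
      (Real.rpow_nonneg ht0.le _)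
  rcases Nat.eq_zero_or_pos p with hp | hp
  · subst hp
    simp only [pow_zero, Nat.cast_zero, one_mul]
    rw [Real.zero_rpow hσ0.ne', Real.rpow_zero, mul_one, mul_zero, Real.rpow_zero, mul_one]
    exact Real.exp_le_exp.2 (by linarith)
  · have hq1 : (1:ℝ) ≤ (p:ℝ) := by exact_mod_cast hp
    have hq0 : (0:ℝ) < (p:ℝ) := by linarith
    have hw0 : 0 < w := by
      rcases hw_nonneg.lt_or_eq with h' | h'
      · exact h'
      · exfalso
        rw [← h'] at hw_eq
        simp only [zero_mul] at hw_eq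
        linarith
    have hkey' := hkey (p:ℝ) t w hq1 ht1 hw0 (by rw [hw_eq, hr_def])
    have hklog : k = Real.exp t := (Real.exp_log hk0).symm
    have lhs_eq : k ^ p * Real.exp (-E) = Real.exp ((p:ℝ)*t - E) := by
      rw [hklog, ← Real.exp_nat_mul, ← Real.exp_add]
      ring_nf
    have rhs_eq : Real.exp B * (1/h) ^ ((p:ℝ) ^ σ) * (p:ℝ) ^ (τ * (p:ℝ) ^ σ)
        = Real.exp (B + Real.log (1/h) * (p:ℝ)^σ + Real.log (p:ℝ) * (τ * (p:ℝ)^σ)) := by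
      have f1 : (1/h) ^ ((p:ℝ)^σ) = Real.exp (Real.log (1/h) * (p:ℝ)^σ) :=
        Real.rpow_def_of_pos (by positivity) _
      have f2 : (p:ℝ) ^ (τ*(p:ℝ)^σ) = Real.exp (Real.log (p:ℝ) * (τ*(p:ℝ)^σ)) :=
        Real.rpow_def_of_pos hq0 _
      rw [f1, f2, ← Real.exp_add, ← Real.exp_add]
    rw [lhs_eq, rhs_eq]
    apply Real.exp_le_exp.2
    have hexpand : (p:ℝ)^σ * (Real.log (1/h) + τ * Real.log (p:ℝ))
        = Real.log (1/h) * (p:ℝ)^σ + Real.log (p:ℝ) * (τ * (p:ℝ)^σ) := by ring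
    linarith [hkey', hexpand ▸ hkey']
end

section
/- Let τ > 0, σ > 1, h > 0, k > e and let W be the principal branch of the Lambert W function. Define f(r) = r^σ ln h + r ln k − τ r^σ ln r for r > 0, and set r_0 = h^{1/τ} · exp( W(𝔯(h,k))/(σ-1) − 1/σ ), where 𝔯(h,k) = h^{-(σ-1)/τ} · e^{(σ-1)/σ} · ((σ-1)/(τσ)) · ln k. Then r_0 is a critical point of f, i.e., σ r_0^{σ-1} ln h + ln k − τσ r_0^{σ-1} ln r_0 − τ r_0^{σ-1} = 0. -/
/-!
Put `u = r₀ ^ (σ - 1)` and `w = W(𝔯(h,k))`. Since `log r₀ = log h / τ + w / (σ - 1) - 1 / σ`,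
the terms in `log h` and the constant `τ u` cancel, and the left-hand side collapses to
`log k - τσ/(σ-1) · w u`. Raising `r₀` to the power `σ - 1` turns `exp (w / (σ - 1))` into `eʷ`,
so `w u = h^{(σ-1)/τ} e^{-(σ-1)/σ} · w eʷ`, and `w eʷ = 𝔯(h,k)` makes this `(σ-1)/(τσ) · log k`.
-/

open Real

theorem Real.log_rpow_mul_exp {h : ℝ} (hh : 0 < h) (a b : ℝ) :
    log (h ^ a * exp b) = a * log h + b := by
  rw [log_mul (rpow_pos_of_pos hh a).ne' (exp_ne_zero b), log_rpow hh, log_exp]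

theorem Real.rpow_mul_exp_rpow {h : ℝ} (hh : 0 ≤ h) (a b c : ℝ) :
    (h ^ a * exp b) ^ c = h ^ (a * c) * exp (b * c) := by
  rw [mul_rpow (rpow_nonneg hh a) (exp_pos b).le, ← rpow_mul hh, ← exp_mul]

section CriticalPoint

variable {τ σ h r : ℝ} (w : ℝ)

theorem critical_expr_eq_sub (hτ : τ ≠ 0) (hσ : σ ≠ 0) (hσ1 : σ - 1 ≠ 0) (hh : 0 < h)
    (hr : r = h ^ (1 / τ) * exp (w / (σ - 1) - 1 / σ)) (L : ℝ) :
    σ * r ^ (σ - 1) * log h + L - τ * σ * r ^ (σ - 1) * log r - τ * r ^ (σ - 1) =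
      L - τ * σ / (σ - 1) * (w * r ^ (σ - 1)) := by
  have hlog : log r = 1 / τ * log h + (w / (σ - 1) - 1 / σ) := by
    rw [hr, log_rpow_mul_exp hh]
  rw [hlog]
  field_simp
  ring

theorem mul_rpow_sub_one_eq (hσ : σ ≠ 0) (hσ1 : σ - 1 ≠ 0) (hh : 0 < h)
    (hr : r = h ^ (1 / τ) * exp (w / (σ - 1) - 1 / σ)) :
    w * r ^ (σ - 1) = h ^ ((σ - 1) / τ) * exp (-((σ - 1) / σ)) * (w * exp w) := by
  have hexp : (w / (σ - 1) - 1 / σ) * (σ - 1) = w + -((σ - 1) / σ) := by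
    field_simp
    ring
  rw [hr, rpow_mul_exp_rpow hh.le, hexp, exp_add, one_div_mul_eq_div]
  ring

end CriticalPoint

theorem critical_point_of_f_general (τ σ h k : ℝ) (hτ : 0 < τ) (hσ : 1 < σ) (hh : 0 < h)
    (hk : Real.exp 1 < k) (W : ℝ → ℝ)
    (hW : ∀ x : ℝ, 0 ≤ x → W x * Real.exp (W x) = x)
    (r₀ : ℝ) (hr₀ : r₀ = h ^ (1 / τ) *
      Real.exp ((W (h ^ (-((σ - 1) / τ)) * Real.exp ((σ - 1) / σ) * ((σ - 1) / (τ * σ)) *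
          Real.log k)) / (σ - 1) - 1 / σ)) :
    σ * r₀ ^ (σ - 1) * Real.log h + Real.log k -
        τ * σ * r₀ ^ (σ - 1) * Real.log r₀ - τ * r₀ ^ (σ - 1) = 0 := by
  have hσ1 : 0 < σ - 1 := sub_pos.mpr hσ
  have hσ0 : σ ≠ 0 := (zero_lt_one.trans hσ).ne'
  have hlogk : 1 < log k := (lt_log_iff_exp_lt ((exp_pos 1).trans hk)).mpr hk
  set x := h ^ (-((σ - 1) / τ)) * exp ((σ - 1) / σ) * ((σ - 1) / (τ * σ)) * log k with hx_def
  have hx : 0 ≤ x := by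
    have : 0 < log k := one_pos.trans hlogk
    positivity
  rw [critical_expr_eq_sub _ hτ.ne' hσ0 hσ1.ne' hh hr₀, mul_rpow_sub_one_eq _ hσ0 hσ1.ne' hh hr₀,
    hW x hx, hx_def, rpow_neg hh.le, exp_neg]
  field_simp
  ring

/-- with f(r) = r^σ ln h + r ln k − τ r^σ ln r and
r₀ = h^{1/τ} exp(W(𝔯(h,k))/(σ-1) − 1/σ), where 𝔯(h,k) = h^{-(σ-1)/τ} e^{(σ-1)/σ}
((σ-1)/(τσ)) ln k and W is the principal branch of the Lambert W function, r₀ is a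
critical point of f: σ r₀^{σ-1} ln h + ln k − τσ r₀^{σ-1} ln r₀ − τ r₀^{σ-1} = 0. -/
theorem critical_point_of_f (τ σ h k : ℝ) (hτ : 0 < τ) (hσ : 1 < σ) (hh : 0 < h)
    (hk : Real.exp 1 < k) (W : ℝ → ℝ) (hW_nonneg : ∀ x : ℝ, 0 ≤ x → 0 ≤ W x)
    (hW : ∀ x : ℝ, 0 ≤ x → W x * Real.exp (W x) = x)
    (r₀ : ℝ) (hr₀ : r₀ = h ^ (1 / τ) *
      Real.exp ((W (h ^ (-((σ - 1) / τ)) * Real.exp ((σ - 1) / σ) * ((σ - 1) / (τ * σ)) *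
          Real.log k)) / (σ - 1) - 1 / σ)) :
    σ * r₀ ^ (σ - 1) * Real.log h + Real.log k -
        τ * σ * r₀ ^ (σ - 1) * Real.log r₀ - τ * r₀ ^ (σ - 1) = 0 :=
  critical_point_of_f_general τ σ h k hτ hσ hh hk W hW r₀ hr₀
end

section
/- Let τ > 0, σ > 1, h > 0, k > e and let W be the principal branch of the Lambert W function. Then the supremum over r > 0 of ln( h^{r^σ} k^r / r^{τ r^σ} ) equals τ^{-1/(σ-1)} · ((σ-1)/σ)^{σ/(σ-1)} · W(𝔯(h,k))^{-σ/(σ-1)} · (ln k)^{σ/(σ-1)} · ( 1/σ + W(𝔯(h,k)) ), where 𝔯(h,k) = h^{-(σ-1)/τ} · e^{(σ-1)/σ} · ((σ-1)/(τσ)) · ln k; moreover this supremum is attained at r_0 = h^{1/τ} · exp( W(𝔯(h,k))/(σ-1) − 1/σ ). -/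
open Real

lemma aux_g_le (σ w' : ℝ) (hσ : 1 < σ) (hw : 0 < w') :
    ∀ t : ℝ, 0 < t →
      t ^ σ * (1/σ - w' - Real.log t) + σ * w' * t ≤ 1/σ + (σ - 1) * w' := by
  set g : ℝ → ℝ := fun t => t ^ σ * (1/σ - w' - Real.log t) + σ * w' * t with hg
  have hσ0 : (0:ℝ) < σ := by linarith
  have hderiv : ∀ t : ℝ, 0 < t →
      HasDerivAt g (σ * (w' * (1 - t ^ (σ-1)) - t ^ (σ-1) * Real.log t)) t := by
    intro t ht
    have h1 : HasDerivAt (fun t : ℝ => t ^ σ) (σ * t ^ (σ - 1)) t :=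
      Real.hasDerivAt_rpow_const (Or.inl ht.ne')
    have h2 : HasDerivAt Real.log (1/t) t := by
      simpa using Real.hasDerivAt_log ht.ne'
    have h3 : HasDerivAt (fun t : ℝ => 1/σ - w' - Real.log t) (-(1/t)) t := by
      simpa using h2.const_sub (1/σ - w')
    have h4 := (h1.mul h3).add ((hasDerivAt_id t).const_mul (σ * w'))
    have key : σ * t ^ (σ - 1) * (1/σ - w' - Real.log t) + t ^ σ * -(1/t) + σ * w' * 1
        = σ * (w' * (1 - t ^ (σ-1)) - t ^ (σ-1) * Real.log t) := by
      have ht1 : t ^ σ * (1/t) = t ^ (σ - 1) := by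
        rw [Real.rpow_sub ht, Real.rpow_one]; ring
      rw [mul_neg, ht1]; field_simp; ring
    rw [key] at h4
    exact h4
  have hcont : ∀ t : ℝ, 0 < t → ContinuousWithinAt g (Set.Ioi 0) t := fun t ht =>
    (hderiv t ht).continuousAt.continuousWithinAt
  have g1 : g 1 = 1/σ + (σ - 1) * w' := by simp [hg]; ring
  intro t ht
  rcases lt_trichotomy t 1 with h1 | h1 | h1
  · -- increasing on Ioc 0 1
    have mono : StrictMonoOn g (Set.Ioc 0 1) := by
      apply strictMonoOn_of_deriv_pos (convex_Ioc 0 1)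
      · intro x hx
        exact ((hderiv x hx.1).continuousAt.continuousWithinAt)
      · intro x hx
        rw [interior_Ioc] at hx
        rw [(hderiv x hx.1).deriv]
        have hx1 : x ^ (σ - 1) < 1 :=
          Real.rpow_lt_one (le_of_lt hx.1) hx.2 (by linarith)
        have hlog : Real.log x < 0 := Real.log_neg hx.1 hx.2
        have hxp : 0 < x ^ (σ - 1) := Real.rpow_pos_of_pos hx.1 _
        have : 0 < w' * (1 - x ^ (σ-1)) - x ^ (σ-1) * Real.log x := by nlinarith
        positivity
    have := mono (Set.mem_Ioc.2 ⟨ht, h1.le⟩) (Set.mem_Ioc.2 ⟨one_pos, le_refl 1⟩) h1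
    rw [g1] at this; exact this.le
  · subst h1; rw [← g1]
  · have anti : StrictAntiOn g (Set.Ici 1) := by
      apply strictAntiOn_of_deriv_neg (convex_Ici 1)
      · intro x hx
        exact ((hderiv x (lt_of_lt_of_le one_pos hx)).continuousAt.continuousWithinAt)
      · intro x hx
        rw [interior_Ici] at hx
        have hx0 : (0:ℝ) < x := lt_trans one_pos hx
        rw [(hderiv x hx0).deriv]
        have hx1 : 1 < x ^ (σ - 1) := Real.one_lt_rpow_iff_of_pos hx0 |>.2 (Or.inl ⟨hx, by linarith⟩)
        have hlog : 0 < Real.log x := Real.log_pos hx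
        have hxp : 0 < x ^ (σ - 1) := Real.rpow_pos_of_pos hx0 _
        have : w' * (1 - x ^ (σ-1)) - x ^ (σ-1) * Real.log x < 0 := by nlinarith
        nlinarith
    have := anti (Set.mem_Ici.2 (le_refl 1)) (Set.mem_Ici.2 h1.le) h1
    rw [g1] at this; exact this.le

/-- the supremum over r > 0 of ln(h^{r^σ} k^r / r^{τ r^σ}) equals
τ^{-1/(σ-1)} ((σ-1)/σ)^{σ/(σ-1)} W(𝔯(h,k))^{-σ/(σ-1)} (ln k)^{σ/(σ-1)} (1/σ + W(𝔯(h,k))),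
and it is attained at r₀ = h^{1/τ} exp(W(𝔯(h,k))/(σ-1) − 1/σ), where
𝔯(h,k) = h^{-(σ-1)/τ} e^{(σ-1)/σ} ((σ-1)/(τσ)) ln k and W is the principal branch of the
Lambert W function. -/
theorem supremum_over_reals_of_associated (τ σ h k : ℝ) (hτ : 0 < τ) (hσ : 1 < σ)
    (hh : 0 < h) (hk : Real.exp 1 < k)
    (W : ℝ → ℝ) (hW_nonneg : ∀ x : ℝ, 0 ≤ x → 0 ≤ W x)
    (hW : ∀ x : ℝ, 0 ≤ x → W x * Real.exp (W x) = x)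
    (R r₀ E : ℝ)
    (hR : R = h ^ (-((σ - 1) / τ)) * Real.exp ((σ - 1) / σ) * ((σ - 1) / (τ * σ)) *
      Real.log k)
    (hr₀ : r₀ = h ^ (1 / τ) * Real.exp (W R / (σ - 1) - 1 / σ))
    (hE : E = τ ^ (-(1 / (σ - 1))) * ((σ - 1) / σ) ^ (σ / (σ - 1)) *
      (W R) ^ (-(σ / (σ - 1))) * (Real.log k) ^ (σ / (σ - 1)) * (1 / σ + W R)) :
    Real.log (h ^ (r₀ ^ σ) * k ^ r₀ / r₀ ^ (τ * r₀ ^ σ)) = E ∧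
      ∀ r : ℝ, 0 < r → Real.log (h ^ (r ^ σ) * k ^ r / r ^ (τ * r ^ σ)) ≤ E := by
  have hσ1 : (0:ℝ) < σ - 1 := by linarith
  have hσ0 : (0:ℝ) < σ := by linarith
  have hk0 : (0:ℝ) < k := lt_trans (Real.exp_pos 1) hk
  have hL : 1 < Real.log k := by
    have := Real.log_lt_log (Real.exp_pos 1) hk
    simpa using this
  have hL0 : (0:ℝ) < Real.log k := by linarith
  set L := Real.log k with hLdef
  have hR0 : (0:ℝ) < R := by
    rw [hR]
    have h1 : (0:ℝ) < h ^ (-((σ - 1) / τ)) := Real.rpow_pos_of_pos hh _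
    positivity
  set w := W R with hwdef
  have hwnn : 0 ≤ w := hW_nonneg R hR0.le
  have hwe : w * Real.exp w = R := hW R hR0.le
  have hw0 : (0:ℝ) < w := by
    rcases hwnn.lt_or_eq with hlt | heq
    · exact hlt
    · exfalso; rw [← heq] at hwe; simp at hwe; linarith
  have hr₀0 : (0:ℝ) < r₀ := by
    rw [hr₀]
    have h1 : (0:ℝ) < h ^ (1/τ) := Real.rpow_pos_of_pos hh _
    positivity
  -- r₀^(σ-1)
  have hr₀pow : r₀ ^ (σ - 1) = h ^ ((σ-1)/τ) * Real.exp (w - (σ-1)/σ) := by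
    rw [hr₀, Real.mul_rpow (Real.rpow_pos_of_pos hh _).le (Real.exp_pos _).le,
      ← Real.rpow_mul hh.le, ← Real.exp_mul]
    congr 2
    · field_simp
    · field_simp
  -- key identity
  have hkey : L = τ * σ / (σ-1) * w * r₀ ^ (σ - 1) := by
    have hstep : τ * σ / (σ-1) * w * r₀ ^ (σ - 1)
        = (w * Real.exp w) * (τ * σ / (σ-1) * h ^ ((σ-1)/τ) * (Real.exp ((σ-1)/σ))⁻¹) := by
      rw [hr₀pow, Real.exp_sub]
      field_simp
    rw [hwe, hR] at hstep
    rw [hstep, Real.rpow_neg hh.le]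
    have hA : h ^ ((σ-1)/τ) ≠ 0 := (Real.rpow_pos_of_pos hh _).ne'
    have hB : Real.exp ((σ-1)/σ) ≠ 0 := (Real.exp_pos _).ne'
    field_simp
  -- log of r₀
  have hlogr₀ : Real.log r₀ = Real.log h / τ + (w/(σ-1) - 1/σ) := by
    rw [hr₀, Real.log_mul (Real.rpow_pos_of_pos hh _).ne' (Real.exp_pos _).ne',
      Real.log_rpow hh, Real.log_exp]
    ring
  -- objective as a smooth function
  have hobj : ∀ r : ℝ, 0 < r →
      Real.log (h ^ (r ^ σ) * k ^ r / r ^ (τ * r ^ σ))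
        = r ^ σ * Real.log h + r * L - τ * r ^ σ * Real.log r := by
    intro r hr
    have h1 : (0:ℝ) < h ^ (r ^ σ) := Real.rpow_pos_of_pos hh _
    have h2 : (0:ℝ) < k ^ r := Real.rpow_pos_of_pos hk0 _
    have h3 : (0:ℝ) < r ^ (τ * r ^ σ) := Real.rpow_pos_of_pos hr _
    rw [Real.log_div (by positivity) h3.ne', Real.log_mul h1.ne' h2.ne',
      Real.log_rpow hh, Real.log_rpow hk0, Real.log_rpow hr]
  -- factorization through g
  have hfact : ∀ r : ℝ, 0 < r →
      r ^ σ * Real.log h + r * L - τ * r ^ σ * Real.log r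
        = τ * r₀ ^ σ * ((r/r₀) ^ σ * (1/σ - w/(σ-1) - Real.log (r/r₀))
            + σ * (w/(σ-1)) * (r/r₀)) := by
    intro r hr
    have hdiv : (r/r₀) ^ σ = r ^ σ / r₀ ^ σ := Real.div_rpow hr.le hr₀0.le σ
    have hlogdiv : Real.log (r/r₀) = Real.log r - Real.log r₀ :=
      Real.log_div hr.ne' hr₀0.ne'
    have hsplit : r₀ ^ σ = r₀ ^ (σ-1) * r₀ := by
      rw [← Real.rpow_add_one hr₀0.ne' (σ-1)]; norm_num
    have hr₀σ0 : (0:ℝ) < r₀ ^ σ := Real.rpow_pos_of_pos hr₀0 _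
    rw [hdiv, hlogdiv, hlogr₀, hkey]
    rw [hsplit]
    field_simp
    ring
  -- value at r₀ and E
  have hg1 : τ * r₀ ^ σ * ((r₀/r₀) ^ σ * (1/σ - w/(σ-1) - Real.log (r₀/r₀))
      + σ * (w/(σ-1)) * (r₀/r₀)) = τ * r₀ ^ σ * (1/σ + w) := by
    rw [div_self hr₀0.ne', Real.one_rpow, Real.log_one]
    have h6 : 1 * (1/σ - w/(σ-1) - 0) + σ * (w/(σ-1)) * 1 = 1/σ + w := by
      field_simp
      ring
    rw [h6]
  have hEeq : E = τ * r₀ ^ σ * (1/σ + w) := by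
    have hp : r₀ ^ (σ-1) = ((σ-1)/σ) * τ⁻¹ * L * w⁻¹ := by
      rw [hkey]
      field_simp
    have h1 : r₀ ^ σ = (r₀ ^ (σ-1)) ^ (σ/(σ-1)) := by
      rw [← Real.rpow_mul hr₀0.le]
      congr 1
      field_simp
    have h2 : r₀ ^ σ = ((σ-1)/σ) ^ (σ/(σ-1)) * (τ⁻¹) ^ (σ/(σ-1)) * L ^ (σ/(σ-1))
        * (w⁻¹) ^ (σ/(σ-1)) := by
      rw [h1, hp, Real.mul_rpow (by positivity) (by positivity),
        Real.mul_rpow (by positivity) (by positivity),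
        Real.mul_rpow (by positivity) (by positivity)]
    have hτp : τ * (τ⁻¹) ^ (σ/(σ-1)) = τ ^ (-(1/(σ-1))) := by
      rw [Real.inv_rpow hτ.le, ← Real.rpow_neg hτ.le]
      nth_rewrite 1 [← Real.rpow_one τ]
      rw [← Real.rpow_add hτ]
      congr 1
      field_simp
      ring
    have hwp : (w⁻¹) ^ (σ/(σ-1)) = w ^ (-(σ/(σ-1))) := by
      rw [Real.inv_rpow hw0.le, ← Real.rpow_neg hw0.le]
    rw [hE, h2, hwp, ← hτp]
    ring
  constructor
  · rw [hobj r₀ hr₀0, hfact r₀ hr₀0, hg1, hEeq]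
  · intro r hr
    rw [hobj r hr, hfact r hr, hEeq]
    have hw' : 0 < w/(σ-1) := by positivity
    have ht : 0 < r/r₀ := by positivity
    have haux := aux_g_le σ (w/(σ-1)) hσ hw' (r/r₀) ht
    have hcoef : (0:ℝ) ≤ τ * r₀ ^ σ := by positivity
    have hgoal : (r/r₀) ^ σ * (1/σ - w/(σ-1) - Real.log (r/r₀))
        + σ * (w/(σ-1)) * (r/r₀) ≤ 1/σ + w := by
      have : (σ-1) * (w/(σ-1)) = w := by field_simp
      linarith [haux]
    calc τ * r₀ ^ σ * ((r/r₀) ^ σ * (1/σ - w/(σ-1) - Real.log (r/r₀))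
          + σ * (w/(σ-1)) * (r/r₀))
        ≤ τ * r₀ ^ σ * (1/σ + w) := by
          exact mul_le_mul_of_nonneg_left hgoal hcoef
end

section
/- Let τ > 0, σ > 1, h > 0, k > e and let W be the principal branch of the Lambert W function. Then the inequality 1/σ + W(𝔯(h,k)) ≤ (σ/(σ-1)) · W(𝔯(h,k)) holds if and only if k ≥ exp( τ · h^{(σ-1)/τ} ), where 𝔯(h,k) = h^{-(σ-1)/τ} · e^{(σ-1)/σ} · ((σ-1)/(τσ)) · ln k. -/
lemma mul_exp_le_mul_exp_iff (a b : ℝ) (ha : 0 ≤ a) (hb : 0 ≤ b) :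
    a * Real.exp a ≤ b * Real.exp b ↔ a ≤ b := by
  constructor
  · intro h
    by_contra hlt
    push_neg at hlt
    have : b * Real.exp b < a * Real.exp a :=
      mul_lt_mul hlt (Real.exp_le_exp.2 hlt.le) (Real.exp_pos b) ha
    linarith
  · intro h
    exact mul_le_mul h (Real.exp_le_exp.2 h) (Real.exp_pos a).le hb

/-- for τ > 0, σ > 1, h > 0 and k > e, the inequality
1/σ + W(𝔯(h,k)) ≤ (σ/(σ-1)) W(𝔯(h,k)) holds iff k ≥ exp(τ h^{(σ-1)/τ}), where
𝔯(h,k) = h^{-(σ-1)/τ} e^{(σ-1)/σ} ((σ-1)/(τσ)) ln k and W is the principal branch of the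
Lambert W function. -/
theorem lambert_inequality_iff (τ σ h k : ℝ) (hτ : 0 < τ) (hσ : 1 < σ) (hh : 0 < h)
    (hk : Real.exp 1 < k) (W : ℝ → ℝ) (hW_nonneg : ∀ x : ℝ, 0 ≤ x → 0 ≤ W x)
    (hW : ∀ x : ℝ, 0 ≤ x → W x * Real.exp (W x) = x) :
    1 / σ + W (h ^ (-((σ - 1) / τ)) * Real.exp ((σ - 1) / σ) * ((σ - 1) / (τ * σ)) *
        Real.log k) ≤
      σ / (σ - 1) * W (h ^ (-((σ - 1) / τ)) * Real.exp ((σ - 1) / σ) * ((σ - 1) / (τ * σ)) *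
        Real.log k) ↔
      Real.exp (τ * h ^ ((σ - 1) / τ)) ≤ k := by
  have hσ0 : (0:ℝ) < σ := by linarith
  have hσ1 : (0:ℝ) < σ - 1 := by linarith
  set p : ℝ := (σ - 1) / τ with hp
  set c : ℝ := (σ - 1) / σ with hc
  have hc0 : 0 < c := div_pos hσ1 hσ0
  have hkpos : 0 < k := lt_trans (Real.exp_pos 1) hk
  have hlogk : 1 < Real.log k := by
    rw [Real.lt_log_iff_exp_lt hkpos]; simpa using hk
  have hhp : 0 < h ^ p := Real.rpow_pos_of_pos hh p
  set r : ℝ := h ^ (-p) * Real.exp c * ((σ - 1) / (τ * σ)) * Real.log k with hr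
  have hrpos : 0 < r := by
    apply mul_pos
    apply mul_pos
    apply mul_pos (Real.rpow_pos_of_pos hh _) (Real.exp_pos _)
    · exact div_pos hσ1 (mul_pos hτ hσ0)
    · linarith
  set w : ℝ := W r with hwdef
  have hw0 : 0 ≤ w := hW_nonneg r hrpos.le
  have hweq : w * Real.exp w = r := hW r hrpos.le
  have e1 : (1 / σ + w ≤ σ / (σ - 1) * w) ↔ c ≤ w := by
    rw [hc, div_le_iff₀ hσ0]
    constructor
    · intro h1
      have h2 := mul_le_mul_of_nonneg_right h1 hσ1.le
      have h3 : σ / (σ - 1) * w * (σ - 1) = σ * w := by field_simp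
      rw [h3] at h2
      have hu : (1 / σ) * σ = 1 := by field_simp
      have h6 : 1 - 1 / σ ≤ w := by nlinarith [h2, hu]
      have h7 := mul_le_mul_of_nonneg_right h6 hσ0.le
      nlinarith [h7, hu]
    · intro h1
      have h4 : 1 / σ ≤ w * σ / (σ * (σ - 1)) := by
        rw [div_le_div_iff₀ hσ0 (by positivity)]
        nlinarith
      have h5 : w * σ / (σ * (σ - 1)) = σ / (σ - 1) * w - w := by
        field_simp; ring
      linarith
  have e2 : c ≤ w ↔ c * Real.exp c ≤ r := by
    rw [← hweq]
    exact (mul_exp_le_mul_exp_iff c w hc0.le hw0).symm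
  have hr_eq : r = (c * Real.exp c) * (Real.log k / (τ * h ^ p)) := by
    rw [hr, hc, Real.rpow_neg hh.le]
    field_simp
  have e3 : c * Real.exp c ≤ r ↔ τ * h ^ p ≤ Real.log k := by
    rw [hr_eq]
    rw [le_mul_iff_one_le_right (by positivity : 0 < c * Real.exp c)]
    rw [le_div_iff₀ (by positivity : (0:ℝ) < τ * h ^ p), one_mul]
  have e4 : (τ * h ^ p ≤ Real.log k) ↔ Real.exp (τ * h ^ p) ≤ k :=
    Real.le_log_iff_exp_le hkpos
  rw [e1, e2, e3, e4]
end

section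
/- For all x ≥ e the principal branch W of the Lambert W function satisfies ln x − ln(ln x) ≤ W(x) ≤ ln x − (1/2) ln(ln x), and equality (on either side) holds if and only if x = e. -/
/-! Put `w = W x`, so that `x = w * exp w` with `w ≥ 1` and `log x = w + log w`. The lower bound
becomes `log w ≤ log (w + log w)`, and the upper bound becomes `w + log w ≤ w ^ 2`, which follows
from `log w ≤ w - 1 ≤ w ^ 2 - w`. Both are strict unless `w = 1`, i.e. unless `x = e`. -/

open Real

theorem Real.log_mul_exp {w : ℝ} (hw : 0 < w) : log (w * exp w) = w + log w := by
  rw [log_mul hw.ne' (exp_ne_zero w), log_exp, add_comm]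

theorem Real.one_le_of_exp_one_le_mul_exp {w : ℝ} (hw : 0 ≤ w) (h : exp 1 ≤ w * exp w) :
    1 ≤ w := by
  by_contra! hw1
  have : w * exp w < 1 * exp 1 := mul_lt_mul'' hw1 (exp_lt_exp.2 hw1) hw (exp_pos w).le
  linarith

theorem Real.add_log_lt_sq {w : ℝ} (hw : 0 < w) (hw1 : w ≠ 1) : w + log w < w ^ 2 := by
  nlinarith [log_lt_sub_one_of_pos hw hw1, sq_nonneg (w - 1)]

theorem Real.log_mul_exp_sub_log_log_lt {w : ℝ} (hw : 1 < w) :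
    log (w * exp w) - log (log (w * exp w)) < w := by
  have hw0 : 0 < w := one_pos.trans hw
  rw [log_mul_exp hw0]
  have : log w < log (w + log w) := log_lt_log hw0 (by linarith [log_pos hw])
  linarith

theorem Real.lt_log_mul_exp_sub_half_log_log {w : ℝ} (hw : 1 < w) :
    w < log (w * exp w) - 1 / 2 * log (log (w * exp w)) := by
  have hw0 : 0 < w := one_pos.trans hw
  rw [log_mul_exp hw0]
  have : log (w + log w) < 2 * log w := by
    rw [← log_rpow hw0, rpow_two]
    exact log_lt_log (by linarith [log_pos hw]) (add_log_lt_sq hw0 hw.ne')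
  linarith

/-- for all x ≥ e the principal branch W of the Lambert W function satisfies
ln x − ln(ln x) ≤ W(x) ≤ ln x − (1/2) ln(ln x), with equality (on either side) iff x = e. -/
theorem lambert_log_bounds (W : ℝ → ℝ) (hW_nonneg : ∀ x : ℝ, 0 ≤ x → 0 ≤ W x)
    (hW : ∀ x : ℝ, 0 ≤ x → W x * Real.exp (W x) = x) :
    ∀ x : ℝ, Real.exp 1 ≤ x →
      (Real.log x - Real.log (Real.log x) ≤ W x ∧
        W x ≤ Real.log x - (1 / 2) * Real.log (Real.log x) ∧
        (Real.log x - Real.log (Real.log x) = W x ↔ x = Real.exp 1) ∧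
        (W x = Real.log x - (1 / 2) * Real.log (Real.log x) ↔ x = Real.exp 1)) := by
  intro x hx
  have hx0 : 0 ≤ x := (exp_pos 1).le.trans hx
  have hxW := hW x hx0
  have hW1 : 1 ≤ W x := one_le_of_exp_one_le_mul_exp (hW_nonneg x hx0) (hxW.symm ▸ hx)
  rcases hW1.eq_or_lt with hW1 | hW1
  · have hxe : x = exp 1 := by rw [← hxW, ← hW1, one_mul]
    subst hxe
    simp [← hW1]
  · have hlower := log_mul_exp_sub_log_log_lt hW1
    have hupper := lt_log_mul_exp_sub_half_log_log hW1
    rw [hxW] at hlower hupper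
    have hxe : x ≠ exp 1 := by
      rintro rfl
      simp only [log_exp, log_one] at hlower hupper
      linarith
    exact ⟨hlower.le, hupper.le, iff_of_false hlower.ne hxe, iff_of_false hupper.ne hxe⟩
end

section
/- Let τ > 0, σ > 1, h > 0, d ≥ 1, and let W be the principal branch of the Lambert W function. Then the integral over ξ ∈ ℝ^d of exp{ −((σ-1)/(2^{σ-1} τ σ))^{1/(σ-1)} · W(𝔯(2^τ/h, e+|ξ|))^{-1/(σ-1)} · (ln(e+|ξ|))^{σ/(σ-1)} } dξ is finite, where 𝔯(h',k) = (h')^{-(σ-1)/τ} · e^{(σ-1)/σ} · ((σ-1)/(τσ)) · ln k. -/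
/-!
Writing `t = log (e + ‖ξ‖) ≥ 1`, the elementary bound `W x ≤ log (1 + x) ≤ 2 √(1 + x)` gives
`W (a t)^(-1/(σ-1)) ≥ C t^(-1/(2(σ-1)))`, so the exponent grows at least like
`t^(1 + 1/(2(σ-1)))`. Superlinear growth in `t` beats `(d + 1) t`, hence the integrand is
`O((e + ‖ξ‖)^(-(d+1)))`, which is integrable on `ℝ^d`.
-/

open MeasureTheory Real Set Module

def IsLambertW (W : ℝ → ℝ) : Prop := ∀ x : ℝ, 0 ≤ x → W x * exp (W x) = x

namespace IsLambertW

variable {W : ℝ → ℝ} {x : ℝ}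

theorem nonneg (hW : IsLambertW W) (hx : 0 ≤ x) : 0 ≤ W x :=
  nonneg_of_mul_nonneg_left (hW x hx ▸ hx) (exp_pos _)

theorem pos (hW : IsLambertW W) (hx : 0 < x) : 0 < W x :=
  pos_of_mul_pos_left (hW x hx.le ▸ hx) (exp_pos _).le

theorem monotoneOn (hW : IsLambertW W) : MonotoneOn W (Ici 0) := by
  intro x hx y hy hxy
  by_contra! hlt
  have : W y * exp (W y) < W x * exp (W x) :=
    mul_lt_mul'' hlt (exp_lt_exp.2 hlt) (hW.nonneg hy) (exp_pos _).le
  rw [hW x hx, hW y hy] at this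
  exact hxy.not_gt this

theorem le_log_one_add (hW : IsLambertW W) (hx : 0 ≤ x) : W x ≤ log (1 + x) := by
  set w := W x
  -- `exp w ≤ 1 + w exp w` is `1 - w ≤ exp (-w)` multiplied by `exp w`
  have key : exp w ≤ 1 + x := by
    have h := mul_le_mul_of_nonneg_right (one_sub_le_exp_neg w) (exp_pos w).le
    rw [← exp_add, neg_add_cancel, exp_zero, sub_mul, one_mul] at h
    linarith [hW x hx]
  simpa using log_le_log (exp_pos w) key

theorem le_rpow_mul_rpow (hW : IsLambertW W) {a ε t : ℝ} (ha : 0 ≤ a) (hε : 0 < ε)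
    (ht : 1 ≤ t) : W (a * t) ≤ (1 + a) ^ ε / ε * t ^ ε := by
  have ht0 : 0 ≤ t := zero_le_one.trans ht
  calc W (a * t) ≤ log (1 + a * t) := hW.le_log_one_add (mul_nonneg ha ht0)
    _ ≤ (1 + a * t) ^ ε / ε := log_le_rpow_div (by positivity) hε
    _ ≤ ((1 + a) * t) ^ ε / ε := by gcongr; nlinarith
    _ = (1 + a) ^ ε / ε * t ^ ε := by rw [mul_rpow (by positivity) ht0]; ring

theorem measurable_comp (hW : IsLambertW W) {α : Type*} [MeasurableSpace α] {g : α → ℝ}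
    (hg : Measurable g) (hg0 : ∀ x, 0 ≤ g x) : Measurable fun x ↦ W (g x) := by
  have hmono : Monotone fun x ↦ W (max x 0) := fun x y hxy ↦
    hW.monotoneOn (le_max_right x 0) (le_max_right y 0) (max_le_max_right 0 hxy)
  convert hmono.measurable.comp hg using 2 with x
  simp [max_eq_left (hg0 x)]

theorem le_rpow_neg_mul_rpow (hW : IsLambertW W) {a ε q s t : ℝ} (ha : 0 < a)
    (hε : 0 < ε) (hq : 0 ≤ q) (ht : 1 ≤ t) :
    ((1 + a) ^ ε / ε) ^ (-q) * t ^ (s - ε * q) ≤ W (a * t) ^ (-q) * t ^ s := by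
  have ht0 : 0 < t := zero_lt_one.trans_le ht
  calc ((1 + a) ^ ε / ε) ^ (-q) * t ^ (s - ε * q)
      = ((1 + a) ^ ε / ε * t ^ ε) ^ (-q) * t ^ s := by
        rw [mul_rpow (by positivity) (by positivity), ← rpow_mul ht0.le, rpow_sub ht0,
          mul_neg, rpow_neg ht0.le]
        field_simp
    _ ≤ W (a * t) ^ (-q) * t ^ s := by
        gcongr ?_ * _
        exact rpow_le_rpow_of_nonpos (hW.pos (by positivity))
          (hW.le_rpow_mul_rpow ha.le hε ht) (neg_nonpos.2 hq)

end IsLambertW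

theorem exists_linear_sub_le_mul_rpow {κ s l : ℝ} (hκ : 0 < κ) (hs : 1 < s) (hl : 0 ≤ l) :
    ∃ M, ∀ t, 0 ≤ t → l * t - M ≤ κ * t ^ s := by
  have hs' : 0 < s - 1 := sub_pos.2 hs
  set T := (l / κ) ^ (s - 1)⁻¹
  refine ⟨l * T, fun t ht ↦ ?_⟩
  rcases le_total t T with htT | hTt
  · nlinarith [show 0 ≤ κ * t ^ s by positivity]
  · have : l ≤ κ * t ^ (s - 1) := by
      calc l = κ * T ^ (s - 1) := by
            rw [← rpow_mul (by positivity), inv_mul_cancel₀ hs'.ne', rpow_one]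
            field_simp
        _ ≤ κ * t ^ (s - 1) := by gcongr
    rw [← add_sub_cancel (1 : ℝ) s, rpow_add' ht (by linarith), rpow_one]
    nlinarith [show 0 ≤ l * T by positivity]

theorem integrable_exp_neg_comp_log {E : Type*} [NormedAddCommGroup E] [NormedSpace ℝ E]
    [FiniteDimensional ℝ E] [MeasurableSpace E] [BorelSpace E] {μ : Measure E}
    [μ.IsAddHaarMeasure] {φ : ℝ → ℝ} {M : ℝ}
    (hmeas : AEStronglyMeasurable (fun ξ : E ↦ φ (log (exp 1 + ‖ξ‖))) μ)
    (hφ : ∀ t, 1 ≤ t → (finrank ℝ E + 1) * t - M ≤ φ t) :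
    Integrable (fun ξ : E ↦ exp (-φ (log (exp 1 + ‖ξ‖)))) μ := by
  set r : ℝ := finrank ℝ E + 1
  refine ((integrable_one_add_norm (μ := μ) (lt_add_one (finrank ℝ E : ℝ))).const_mul
    (exp M)).mono' (continuous_exp.comp_aestronglyMeasurable hmeas.neg) ?_
  refine Filter.Eventually.of_forall fun ξ ↦ ?_
  have he1 : 1 ≤ exp 1 := by linarith [add_one_le_exp 1]
  have hpos : 0 < exp 1 + ‖ξ‖ := by positivity
  have hlog : 1 ≤ log (exp 1 + ‖ξ‖) := by
    simpa only [log_exp] using log_le_log (exp_pos 1) (le_add_of_nonneg_right (norm_nonneg ξ))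
  rw [norm_of_nonneg (exp_pos _).le]
  calc exp (-φ (log (exp 1 + ‖ξ‖))) ≤ exp (M + -(r * log (exp 1 + ‖ξ‖))) := by
        gcongr; linarith [hφ _ hlog]
    _ = exp M * (exp 1 + ‖ξ‖) ^ (-r) := by
        rw [exp_add, rpow_def_of_pos hpos, mul_neg, mul_comm r]
    _ ≤ exp M * (1 + ‖ξ‖) ^ (-r) := by
        have hr : 0 ≤ r := by positivity
        gcongr exp M * ?_
        exact rpow_le_rpow_of_nonpos (by positivity) (by linarith) (by linarith)

theorem weight_integrable_general (d : ℕ) (τ σ h : ℝ) (hτ : 0 < τ) (hσ : 1 < σ)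
    (hh : 0 < h) (W : ℝ → ℝ)
    (hW : ∀ x : ℝ, 0 ≤ x → W x * Real.exp (W x) = x) :
    Integrable (fun ξ : EuclideanSpace ℝ (Fin d) =>
      Real.exp (-(((σ - 1) / (2 ^ (σ - 1) * τ * σ)) ^ (1 / (σ - 1)) *
        (W (((2 : ℝ) ^ τ / h) ^ (-((σ - 1) / τ)) * Real.exp ((σ - 1) / σ) *
            ((σ - 1) / (τ * σ)) * Real.log (Real.exp 1 + ‖ξ‖))) ^ (-(1 / (σ - 1))) *
        (Real.log (Real.exp 1 + ‖ξ‖)) ^ (σ / (σ - 1))))) := by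
  replace hW : IsLambertW W := hW
  have hp : 0 < σ - 1 := sub_pos.2 hσ
  set a := ((2 : ℝ) ^ τ / h) ^ (-((σ - 1) / τ)) * exp ((σ - 1) / σ) * ((σ - 1) / (τ * σ))
  set c := ((σ - 1) / (2 ^ (σ - 1) * τ * σ)) ^ (1 / (σ - 1))
  have hσq : σ / (σ - 1) = 1 + 1 / (σ - 1) := by field_simp; ring
  set q := 1 / (σ - 1)
  have ha : 0 < a := by positivity
  have hc : 0 < c := by positivity
  have hq : 0 < q := by positivity
  have hs : 1 < σ / (σ - 1) - 1 / 2 * q := by linarith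
  set C := (1 + a) ^ (1 / 2 : ℝ) / (1 / 2)
  have hC : 0 < C := by positivity
  obtain ⟨M, hM⟩ := exists_linear_sub_le_mul_rpow (mul_pos hc (rpow_pos_of_pos hC (-q))) hs
    (by positivity : (0 : ℝ) ≤ d + 1)
  refine integrable_exp_neg_comp_log (φ := fun t ↦ c * W (a * t) ^ (-q) * t ^ (σ / (σ - 1)))
    (M := M) ?_ fun t ht ↦ ?_
  · refine Measurable.aestronglyMeasurable ?_
    have hL : Measurable fun ξ : EuclideanSpace ℝ (Fin d) ↦ log (exp 1 + ‖ξ‖) := by fun_prop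
    have hWL := hW.measurable_comp (hL.const_mul a) fun ξ ↦
      mul_nonneg ha.le (log_nonneg (by linarith [add_one_le_exp 1, norm_nonneg ξ]))
    exact ((hWL.pow_const _).const_mul c).mul (hL.pow_const _)
  · rw [finrank_euclideanSpace_fin]
    calc (d + 1) * t - M ≤ c * C ^ (-q) * t ^ (σ / (σ - 1) - 1 / 2 * q) := hM t (by linarith)
      _ ≤ c * W (a * t) ^ (-q) * t ^ (σ / (σ - 1)) := by
        rw [mul_assoc, mul_assoc]
        exact mul_le_mul_of_nonneg_left
          (hW.le_rpow_neg_mul_rpow ha one_half_pos hq.le ht) hc.le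

/-- for τ > 0, σ > 1, h > 0 and d ≥ 1, the function
ξ ↦ exp{−((σ-1)/(2^{σ-1}τσ))^{1/(σ-1)} W(𝔯(2^τ/h, e+|ξ|))^{-1/(σ-1)}
(ln(e+|ξ|))^{σ/(σ-1)}} is integrable on ℝ^d, where
𝔯(h',k) = (h')^{-(σ-1)/τ} e^{(σ-1)/σ} ((σ-1)/(τσ)) ln k and W is the principal branch of
the Lambert W function. -/
theorem weight_integrable (d : ℕ) (hd : 1 ≤ d) (τ σ h : ℝ) (hτ : 0 < τ) (hσ : 1 < σ)
    (hh : 0 < h) (W : ℝ → ℝ) (hW_nonneg : ∀ x : ℝ, 0 ≤ x → 0 ≤ W x)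
    (hW : ∀ x : ℝ, 0 ≤ x → W x * Real.exp (W x) = x) :
    Integrable (fun ξ : EuclideanSpace ℝ (Fin d) =>
      Real.exp (-(((σ - 1) / (2 ^ (σ - 1) * τ * σ)) ^ (1 / (σ - 1)) *
        (W (((2 : ℝ) ^ τ / h) ^ (-((σ - 1) / τ)) * Real.exp ((σ - 1) / σ) *
            ((σ - 1) / (τ * σ)) * Real.log (Real.exp 1 + ‖ξ‖))) ^ (-(1 / (σ - 1))) *
        (Real.log (Real.exp 1 + ‖ξ‖)) ^ (σ / (σ - 1))))) :=
  weight_integrable_general d τ σ h hτ hσ hh W hW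
end

section
/- Let σ₂ > σ₁ ≥ 1, let K ⊂ ℝ^d be a compact set, and let φ be a smooth function on a neighborhood of K. Suppose there exist τ₁ > 0, h₁ > 0 and C₁ > 0 such that |∂^α φ(x)| ≤ C₁ · h₁^{|α|^{σ₁}} · |α|^{τ₁ |α|^{σ₁}} for all multi-indices α and all x ∈ K (convention 0^{τ·0^σ} = 1 for α = 0). Then for every τ₂ > 0 there exist h₂ > 0 and C₂ > 0 such that |∂^α φ(x)| ≤ C₂ · h₂^{|α|^{σ₂}} · |α|^{τ₂ |α|^{σ₂}} for all multi-indices α and all x ∈ K. -/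
set_option maxHeartbeats 1000000


/-- Partial derivative in direction `i`. -/
noncomputable def pderivI {d : ℕ} {E : Type*} [NormedAddCommGroup E] [NormedSpace ℝ E]
    (i : Fin d) (f : (Fin d → ℝ) → E) : (Fin d → ℝ) → E :=
  fun x => fderiv ℝ f x (Pi.single i 1)

/-- Multi-index partial derivative ∂^α. -/
noncomputable def mderiv {d : ℕ} {E : Type*} [NormedAddCommGroup E] [NormedSpace ℝ E]
    (α : Fin d → ℕ) (f : (Fin d → ℝ) → E) : (Fin d → ℝ) → E :=
  (List.finRange d).foldr (fun i g => (pderivI i)^[α i] g) f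

/-- let σ₂ > σ₁ ≥ 1, K ⊂ ℝ^d compact, and φ smooth on a neighborhood V of
K. If |∂^α φ(x)| ≤ C₁ h₁^{|α|^{σ₁}} |α|^{τ₁|α|^{σ₁}} for all α and x ∈ K (for some
τ₁, h₁, C₁ > 0), then for every τ₂ > 0 there are h₂, C₂ > 0 such that
|∂^α φ(x)| ≤ C₂ h₂^{|α|^{σ₂}} |α|^{τ₂|α|^{σ₂}} for all α and x ∈ K
(real-power convention: 0 ^ 0 = 1 for α = 0). -/
theorem extended_gevrey_embedding (d : ℕ) (σ₁ σ₂ : ℝ) (hσ₁ : 1 ≤ σ₁) (hσ₁₂ : σ₁ < σ₂)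
    (K V : Set (Fin d → ℝ)) (hK : IsCompact K) (hV : IsOpen V) (hKV : K ⊆ V)
    (φ : (Fin d → ℝ) → ℂ) (hφ : ContDiffOn ℝ (⊤ : ℕ∞) φ V)
    (τ₁ h₁ C₁ : ℝ) (hτ₁ : 0 < τ₁) (hh₁ : 0 < h₁) (hC₁ : 0 < C₁)
    (hbound : ∀ (α : Fin d → ℕ) (x : Fin d → ℝ), x ∈ K →
      ‖mderiv α φ x‖ ≤ C₁ * h₁ ^ (((∑ i, α i : ℕ) : ℝ) ^ σ₁) *
        ((∑ i, α i : ℕ) : ℝ) ^ (τ₁ * ((∑ i, α i : ℕ) : ℝ) ^ σ₁)) :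
    ∀ τ₂ : ℝ, 0 < τ₂ → ∃ h₂ C₂ : ℝ, 0 < h₂ ∧ 0 < C₂ ∧
      ∀ (α : Fin d → ℕ) (x : Fin d → ℝ), x ∈ K →
        ‖mderiv α φ x‖ ≤ C₂ * h₂ ^ (((∑ i, α i : ℕ) : ℝ) ^ σ₂) *
          ((∑ i, α i : ℕ) : ℝ) ^ (τ₂ * ((∑ i, α i : ℕ) : ℝ) ^ σ₂) := by

  intro τ₂ hτ₂
  obtain ⟨N₀, hN₀⟩ := exists_nat_ge ((τ₁ / τ₂) ^ ((σ₂ - σ₁)⁻¹))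
  set N : ℕ := N₀ + 1 with hNdef
  have hσ₂ : (0:ℝ) < σ₂ := lt_of_le_of_lt (le_trans zero_le_one hσ₁) hσ₁₂
  have hσd : (0:ℝ) < σ₂ - σ₁ := by linarith
  set h₂ : ℝ := max h₁ 1 with hh₂def
  have hh₂1 : (1:ℝ) ≤ h₂ := le_max_right _ _
  have hh₂pos : (0:ℝ) < h₂ := lt_of_lt_of_le one_pos hh₂1
  set S : ℝ := 1 + ∑ n ∈ Finset.range (N+1), (n:ℝ) ^ (τ₁ * (n:ℝ) ^ σ₁) with hSdef
  have hsum_nonneg : (0:ℝ) ≤ ∑ n ∈ Finset.range (N+1), (n:ℝ) ^ (τ₁ * (n:ℝ) ^ σ₁) :=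
    Finset.sum_nonneg fun n _ => Real.rpow_nonneg (Nat.cast_nonneg n) _
  have hS1 : (1:ℝ) ≤ S := by simp only [hSdef]; linarith
  have hSpos : (0:ℝ) < S := lt_of_lt_of_le one_pos hS1
  refine ⟨h₂, C₁ * S, hh₂pos, mul_pos hC₁ hSpos, ?_⟩
  intro α x hx
  refine (hbound α x hx).trans ?_
  set n : ℕ := ∑ i, α i with hn
  rcases Nat.eq_zero_or_pos n with h0 | hpos
  · rw [h0]
    simp only [Nat.cast_zero, Real.zero_rpow (ne_of_gt (lt_of_lt_of_le zero_lt_one hσ₁)),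
      Real.zero_rpow (ne_of_gt hσ₂), mul_zero, Real.rpow_zero, mul_one]
    nlinarith
  · have hm1 : (1:ℝ) ≤ (n:ℝ) := by exact_mod_cast hpos
    have hm0 : (0:ℝ) < (n:ℝ) := lt_of_lt_of_le one_pos hm1
    have hee : (n:ℝ) ^ σ₁ ≤ (n:ℝ) ^ σ₂ :=
      Real.rpow_le_rpow_of_exponent_le hm1 (le_of_lt hσ₁₂)
    have hstep1 : h₁ ^ ((n:ℝ) ^ σ₁) ≤ h₂ ^ ((n:ℝ) ^ σ₂) := by
      calc h₁ ^ ((n:ℝ) ^ σ₁) ≤ h₂ ^ ((n:ℝ) ^ σ₁) :=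
            Real.rpow_le_rpow (le_of_lt hh₁) (le_max_left _ _)
              (Real.rpow_nonneg hm0.le _)
        _ ≤ h₂ ^ ((n:ℝ) ^ σ₂) := Real.rpow_le_rpow_of_exponent_le hh₂1 hee
    have hstep2 : (n:ℝ) ^ (τ₁ * (n:ℝ) ^ σ₁) ≤ S * (n:ℝ) ^ (τ₂ * (n:ℝ) ^ σ₂) := by
      have hone : (1:ℝ) ≤ (n:ℝ) ^ (τ₂ * (n:ℝ) ^ σ₂) :=
        Real.one_le_rpow hm1
          (mul_nonneg hτ₂.le (Real.rpow_nonneg hm0.le _))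
      by_cases hcase : n ≤ N
      · have hmem : n ∈ Finset.range (N+1) := Finset.mem_range.mpr (Nat.lt_succ_of_le hcase)
        have hterm : (n:ℝ) ^ (τ₁ * (n:ℝ) ^ σ₁) ≤
            ∑ k ∈ Finset.range (N+1), (k:ℝ) ^ (τ₁ * (k:ℝ) ^ σ₁) :=
          Finset.single_le_sum (f := fun k : ℕ => (k:ℝ) ^ (τ₁ * (k:ℝ) ^ σ₁))
            (fun k _ => Real.rpow_nonneg (Nat.cast_nonneg k) _) hmem
        have hSle : (n:ℝ) ^ (τ₁ * (n:ℝ) ^ σ₁) ≤ S := by simp only [hSdef]; linarith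
        calc (n:ℝ) ^ (τ₁ * (n:ℝ) ^ σ₁) ≤ S := hSle
          _ = S * 1 := (mul_one S).symm
          _ ≤ S * (n:ℝ) ^ (τ₂ * (n:ℝ) ^ σ₂) := by
              exact mul_le_mul_of_nonneg_left hone hSpos.le
      · push_neg at hcase
        have hNn : ((τ₁ / τ₂) ^ ((σ₂ - σ₁)⁻¹) : ℝ) ≤ (n:ℝ) := by
          have : (N₀ : ℝ) ≤ (n : ℝ) := by
            exact_mod_cast le_of_lt (lt_of_le_of_lt (Nat.le_succ N₀) hcase)
          linarith
        have hbase : τ₁ / τ₂ ≤ (n:ℝ) ^ (σ₂ - σ₁) := by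
          have h1 : (((τ₁ / τ₂) ^ ((σ₂ - σ₁)⁻¹) : ℝ)) ^ (σ₂ - σ₁) ≤ (n:ℝ) ^ (σ₂ - σ₁) :=
            Real.rpow_le_rpow (Real.rpow_nonneg (div_pos hτ₁ hτ₂).le _) hNn hσd.le
          rwa [Real.rpow_inv_rpow (div_pos hτ₁ hτ₂).le (ne_of_gt hσd)] at h1
        have hexp : τ₁ * (n:ℝ) ^ σ₁ ≤ τ₂ * (n:ℝ) ^ σ₂ := by
          have hsplit : (n:ℝ) ^ σ₂ = (n:ℝ) ^ σ₁ * (n:ℝ) ^ (σ₂ - σ₁) := by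
            rw [← Real.rpow_add hm0]; ring_nf
          rw [hsplit]
          have hp1 : (0:ℝ) ≤ (n:ℝ) ^ σ₁ := Real.rpow_nonneg hm0.le _
          have := mul_le_mul_of_nonneg_left hbase hp1
          calc τ₁ * (n:ℝ) ^ σ₁ = ((n:ℝ) ^ σ₁ * (τ₁ / τ₂)) * τ₂ := by
                field_simp
            _ ≤ ((n:ℝ) ^ σ₁ * (n:ℝ) ^ (σ₂ - σ₁)) * τ₂ := by
                exact mul_le_mul_of_nonneg_right this hτ₂.le
            _ = τ₂ * ((n:ℝ) ^ σ₁ * (n:ℝ) ^ (σ₂ - σ₁)) := by ring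
        calc (n:ℝ) ^ (τ₁ * (n:ℝ) ^ σ₁) ≤ (n:ℝ) ^ (τ₂ * (n:ℝ) ^ σ₂) :=
              Real.rpow_le_rpow_of_exponent_le hm1 hexp
          _ = 1 * (n:ℝ) ^ (τ₂ * (n:ℝ) ^ σ₂) := (one_mul _).symm
          _ ≤ S * (n:ℝ) ^ (τ₂ * (n:ℝ) ^ σ₂) := by
              exact mul_le_mul_of_nonneg_right hS1 (Real.rpow_nonneg hm0.le _)
    calc C₁ * h₁ ^ ((n:ℝ) ^ σ₁) * (n:ℝ) ^ (τ₁ * (n:ℝ) ^ σ₁)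
        ≤ C₁ * h₂ ^ ((n:ℝ) ^ σ₂) * (S * (n:ℝ) ^ (τ₂ * (n:ℝ) ^ σ₂)) := by
          refine mul_le_mul ?_ hstep2 (Real.rpow_nonneg hm0.le _) ?_
          · exact mul_le_mul_of_nonneg_left hstep1 hC₁.le
          · exact mul_nonneg hC₁.le (Real.rpow_nonneg hh₂pos.le _)
      _ = C₁ * S * h₂ ^ ((n:ℝ) ^ σ₂) * (n:ℝ) ^ (τ₂ * (n:ℝ) ^ σ₂) := by ring
end
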